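/- arXiv:2106.10219 — 7 statements merged into one kernel-verified Lean document; each statement's English description precedes it below -/
import Mathlib

section
/- Let I be a nearly normally torsion-free monomial ideal in R = K[x_1,...,x_n], witnessed by a monomial prime ideal p (i.e., there exists k ≥ 1 such that Ass(R/I^m) = Min(I) for all 1 ≤ m ≤ k and Ass(R/I^m) ⊆ Min(I) ∪ {p} for all m ≥ k+1). Then for every variable x_i ∈ p, the monomial localization I(p \ {x_i}) is normally torsion-free. -/
open MvPolynomial
open scoped Classical

/-- Monomial localization: set every variable outside `S` equal to 1. -/
noncomputable def mloc {K : Type*} [Field K] {n : ℕ}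
    (I : Ideal (MvPolynomial (Fin n) K)) (S : Set (Fin n)) :
    Ideal (MvPolynomial (Fin n) K) :=
  I.map (aeval (fun j => if j ∈ S then X j else (1 : MvPolynomial (Fin n) K))).toRingHom

/-- `I` is a monomial ideal: generated by monomials. -/
def IsMonomialIdeal {K : Type*} [Field K] {n : ℕ} (I : Ideal (MvPolynomial (Fin n) K)) : Prop :=
  ∃ G : Set (Fin n →₀ ℕ), I = Ideal.span ((fun m => monomial m (1 : K)) '' G)

/-- Normally torsion-free: `Ass(R/I^k) ⊆ Ass(R/I)` for all `k ≥ 1`. -/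
def IsNTF {K : Type*} [Field K] {n : ℕ} (I : Ideal (MvPolynomial (Fin n) K)) : Prop :=
  ∀ k : ℕ, 1 ≤ k →
    associatedPrimes (MvPolynomial (Fin n) K) (MvPolynomial (Fin n) K ⧸ I ^ k) ⊆
      associatedPrimes (MvPolynomial (Fin n) K) (MvPolynomial (Fin n) K ⧸ I)


section Loc
variable {R : Type*} [CommRing R] (W : Submonoid R) (B : Type*) [CommRing B] [Algebra R B]
  [IsLocalization W B]

lemma mem_ann_mk_iff {R : Type*} [CommRing R] (J : Ideal R) (y b : R) :
    b ∈ (Submodule.span R {Ideal.Quotient.mk J y}).annihilator ↔ b * y ∈ J := by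
  rw [Submodule.mem_annihilator_span_singleton, ← Ideal.Quotient.mk_eq_mk,
    ← Submodule.Quotient.mk_smul, smul_eq_mul, Ideal.Quotient.mk_eq_mk,
    Ideal.Quotient.eq_zero_iff_mem]

lemma assocPrime_map [IsNoetherianRing R] (a P : Ideal R) (hP : P ∈ associatedPrimes R (R ⧸ a))
    (hd : Disjoint (W : Set R) (P : Set R)) :
    P.map (algebraMap R B) ∈ associatedPrimes B (B ⧸ a.map (algebraMap R B)) := by
  haveI := IsLocalization.isNoetherianRing W B ‹_›
  obtain ⟨hPp, x, hx⟩ := isAssociatedPrime_iff.1 hP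
  rw [Submodule.bot_colon'] at hx
  obtain ⟨r, rfl⟩ := Ideal.Quotient.mk_surjective x
  have key : ∀ c : R, c ∈ P ↔ c * r ∈ a := fun c => by rw [hx, mem_ann_mk_iff]
  refine isAssociatedPrime_iff.2 ⟨IsLocalization.isPrime_of_isPrime_disjoint W B P hPp hd, Ideal.Quotient.mk _ (algebraMap R B r), ?_⟩
  rw [Submodule.bot_colon']
  apply le_antisymm
  · rw [Ideal.map, Ideal.span_le]
    rintro _ ⟨c, hc, rfl⟩
    rw [SetLike.mem_coe, mem_ann_mk_iff, ← map_mul]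
    exact Ideal.mem_map_of_mem _ ((key c).1 hc)
  · intro b hb
    rw [mem_ann_mk_iff] at hb
    obtain ⟨⟨c, w⟩, hw⟩ := IsLocalization.surj W b
    obtain ⟨⟨z, w₁⟩, hz⟩ := (IsLocalization.mem_map_algebraMap_iff W B).1 hb
    have heq : algebraMap R B (c * (r * w₁)) = algebraMap R B (w * z) := by
      simp only [map_mul]
      rw [← hw, ← hz]; ring
    obtain ⟨w₂, hw₂⟩ := (IsLocalization.eq_iff_exists W B).1 heq
    have hmem : ((w₂ : R) * w₁) * c ∈ P := by
      rw [key, show ((w₂ : R) * w₁) * c * r = (w₂ : R) * (c * (r * w₁)) by ring, hw₂]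
      exact a.mul_mem_left _ (a.mul_mem_left _ z.2)
    have hWmem : (w₂ : R) * w₁ ∈ W := W.mul_mem w₂.2 w₁.2
    have hc : c ∈ P :=
      (hPp.mem_or_mem hmem).resolve_left (Set.disjoint_left.mp hd hWmem)
    have : b * algebraMap R B w ∈ P.map (algebraMap R B) := hw ▸ Ideal.mem_map_of_mem _ hc
    rwa [mul_comm, Ideal.unit_mul_mem_iff_mem _ (IsLocalization.map_units B w)] at this

end Loc

section Loc2

lemma assocPrime_comap {R : Type*} [CommRing R] (W : Submonoid R) (B : Type*) [CommRing B]
    [Algebra R B] [IsLocalization W B] [IsNoetherianRing R] (a : Ideal R) (Q : Ideal B)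
    (hQ : Q ∈ associatedPrimes B (B ⧸ a.map (algebraMap R B))) :
    Q.comap (algebraMap R B) ∈ associatedPrimes R (R ⧸ a) := by
  classical
  haveI := IsLocalization.isNoetherianRing W B ‹_›
  obtain ⟨hQp, x, hx⟩ := isAssociatedPrime_iff.1 hQ
  rw [Submodule.bot_colon'] at hx
  obtain ⟨y, rfl⟩ := Ideal.Quotient.mk_surjective x
  obtain ⟨⟨r, w⟩, hrw⟩ := IsLocalization.mk'_surjective W y
  -- replace y by algebraMap r : Q = ann (mk (algebraMap r))
  have hQ' : ∀ b : B, b ∈ Q ↔ b * algebraMap R B r ∈ a.map (algebraMap R B) := by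
    intro b
    rw [hx, mem_ann_mk_iff]
    constructor
    · intro h
      have : (b * y) * algebraMap R B w ∈ a.map (algebraMap R B) :=
        Ideal.mul_mem_right _ _ h
      rwa [mul_assoc, ← hrw, IsLocalization.mk'_spec] at this
    · intro h
      rw [← hrw, ← Ideal.unit_mul_mem_iff_mem _ (IsLocalization.map_units B w),
        show algebraMap R B ↑w * (b * IsLocalization.mk' B r w) =
          b * (IsLocalization.mk' B r w * algebraMap R B ↑w) by ring,
        IsLocalization.mk'_spec]
      exact h
  set Pc := Q.comap (algebraMap R B) with hPc
  obtain ⟨s, hs⟩ := (isNoetherianRing_iff_ideal_fg R).mp ‹_› Pc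
  have hgen : ∀ c ∈ s, ∃ u : W, (u : R) * (c * r) ∈ a := by
    intro c hc
    have hcP : c ∈ Pc := hs ▸ Ideal.subset_span hc
    have : algebraMap R B c * algebraMap R B r ∈ a.map (algebraMap R B) :=
      (hQ' _).1 hcP
    rw [← map_mul] at this
    obtain ⟨⟨z, w₁⟩, hz⟩ := (IsLocalization.mem_map_algebraMap_iff W B).1 this
    rw [← map_mul] at hz
    obtain ⟨w₂, hw₂⟩ := (IsLocalization.eq_iff_exists W B).1 hz
    refine ⟨w₂ * w₁, ?_⟩
    rw [show ((w₂ * w₁ : W) : R) * (c * r) = (w₂ : R) * (c * r * w₁) by push_cast; ring, hw₂]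
    exact a.mul_mem_left _ z.2
  choose u hu using hgen
  set w0 : W := ∏ c ∈ s.attach, u c c.2 with hw0
  have hw0mem : ∀ c ∈ s, c * (w0 * r) ∈ a := by
    intro c hc
    have : w0 = u c hc * ∏ c' ∈ s.attach.erase ⟨c, hc⟩, u c' c'.2 := by
      rw [hw0, ← Finset.mul_prod_erase s.attach _ (Finset.mem_attach s ⟨c, hc⟩)]
    rw [show c * ((w0 : R) * r) = (((∏ c' ∈ s.attach.erase ⟨c, hc⟩, u c' c'.2 : W) : R)) *
      ((u c hc : R) * (c * r)) by rw [this]; push_cast; ring]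
    exact a.mul_mem_left _ (hu c hc)
  refine isAssociatedPrime_iff.2 ⟨hQp.comap _, Ideal.Quotient.mk a (w0 * r), ?_⟩
  rw [Submodule.bot_colon']
  apply le_antisymm
  · intro b hb
    rw [mem_ann_mk_iff]
    have hb' : b ∈ Ideal.span (s : Set R) := hs ▸ hb
    have : Ideal.span (s : Set R) ≤ a.colon (Ideal.span {(w0 : R) * r}) := by
      rw [Ideal.span_le]
      intro c hc
      rw [SetLike.mem_coe, Ideal.mem_colon_span_singleton]
      exact hw0mem c hc
    have := this hb'
    rwa [Ideal.mem_colon_span_singleton] at this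
  · intro b hb
    rw [mem_ann_mk_iff] at hb
    have : (algebraMap R B b * algebraMap R B w0) * algebraMap R B r ∈
        a.map (algebraMap R B) := by
      rw [← map_mul, ← map_mul, show b * (w0 : R) * r = b * ((w0 : R) * r) by ring]
      exact Ideal.mem_map_of_mem _ hb
    have hbQ : algebraMap R B b * algebraMap R B w0 ∈ Q := (hQ' _).2 this
    rw [mul_comm, Ideal.unit_mul_mem_iff_mem _ (IsLocalization.map_units B w0)] at hbQ
    exact hbQ

end Loc2


section MvAux
variable {K : Type*} [Field K] {σ : Type*}

/-- The submonoid generated by the variables outside `T`. -/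
noncomputable def Wsub (T : Set σ) : Submonoid (MvPolynomial σ K) :=
  Submonoid.closure ((fun j => (X j : MvPolynomial σ K)) '' Tᶜ)

lemma aeval_if_monomial (T : Set σ) (m : σ →₀ ℕ) :
    aeval (fun j => if j ∈ T then (X j : MvPolynomial σ K) else 1) (monomial m (1 : K))
      = monomial (m.filter (· ∈ T)) 1 := by
  rw [aeval_monomial, map_one, one_mul, monomial_eq, C_1, one_mul]
  rw [Finsupp.prod, Finsupp.prod, Finsupp.support_filter, Finset.prod_filter]
  refine Finset.prod_congr rfl fun j hj => ?_
  by_cases h : j ∈ T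
  · simp [h, Finsupp.filter_apply_pos]
  · simp [h]

lemma monomial_filter_decomp (T : Set σ) (m : σ →₀ ℕ) :
    monomial m (1 : K) =
      monomial (m.filter (· ∈ T)) 1 * monomial (m.filter (fun j => ¬ j ∈ T)) 1 := by
  rw [monomial_mul, one_mul, Finsupp.filter_pos_add_filter_neg]

lemma mono_mem_Wsub (T : Set σ) (m : σ →₀ ℕ) (hm : ∀ j ∈ m.support, ¬ j ∈ T) :
    monomial m (1 : K) ∈ Wsub (K := K) T := by
  revert hm
  induction m using Finsupp.induction with
  | zero =>
    intro _
    simpa [monomial_zero'] using one_mem (Wsub (K := K) T)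
  | single_add j k f hjf hk ih =>
    intro hm
    have hj : ¬ j ∈ T := by
      refine hm j ?_
      rw [Finsupp.mem_support_iff, Finsupp.add_apply, Finsupp.single_eq_same,
        Finsupp.notMem_support_iff.1 hjf]
      simpa using hk
    have hf : ∀ l ∈ f.support, ¬ l ∈ T := by
      intro l hl
      refine hm l ?_
      have hlj : l ≠ j := fun h => hjf (h ▸ hl)
      rw [Finsupp.mem_support_iff, Finsupp.add_apply, Finsupp.single_eq_of_ne' (Ne.symm hlj)]
      simpa using Finsupp.mem_support_iff.1 hl
    have hdec : monomial (Finsupp.single j k + f) (1 : K) = (X j) ^ k * monomial f 1 := by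
      rw [X_pow_eq_monomial, monomial_mul, one_mul]
    rw [hdec]
    have hXj : (X j : MvPolynomial σ K) ∈ Wsub (K := K) T :=
      Submonoid.subset_closure (Set.mem_image_of_mem _ hj)
    exact mul_mem (pow_mem hXj k) (ih hf)

end MvAux

section MvAux2
variable {K : Type*} [Field K] {σ : Type*}

lemma mem_ann_mk_iff' {R : Type*} [CommRing R] (J : Ideal R) (y b : R) :
    b ∈ (Submodule.span R {Ideal.Quotient.mk J y}).annihilator ↔ b * y ∈ J := by
  rw [Submodule.mem_annihilator_span_singleton, ← Ideal.Quotient.mk_eq_mk,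
    ← Submodule.Quotient.mk_smul, smul_eq_mul, Ideal.Quotient.mk_eq_mk,
    Ideal.Quotient.eq_zero_iff_mem]

lemma span_mono_pow (T : Set σ) (A : Set (σ →₀ ℕ)) (hA : ∀ g ∈ A, ∀ j, ¬ j ∈ T → g j = 0)
    (m : ℕ) :
    ∃ A' : Set (σ →₀ ℕ), (∀ g ∈ A', ∀ j, ¬ j ∈ T → g j = 0) ∧
      (Ideal.span ((fun d => monomial d (1 : K)) '' A)) ^ m =
        Ideal.span ((fun d => monomial d (1 : K)) '' A') := by
  induction m with
  | zero =>
    refine ⟨{0}, by simp, ?_⟩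
    rw [pow_zero, Set.image_singleton]
    simp [monomial_zero', Ideal.span_singleton_one]
  | succ m ih =>
    obtain ⟨A', hA', hspan⟩ := ih
    refine ⟨Set.image2 (· + ·) A' A, ?_, ?_⟩
    · rintro _ ⟨a, ha, b, hb, rfl⟩ j hj
      simp [hA' a ha j hj, hA b hb j hj]
    · rw [pow_succ, hspan, Ideal.span_mul_span']
      congr 1
      rw [← Set.image2_mul, Set.image2_image_left, Set.image2_image_right,
        Set.image_image2]
      exact Set.image2_congr fun a _ b _ => by rw [monomial_mul, one_mul]

lemma ass_disjoint_Wsub [Finite σ] (T : Set σ) (A' : Set (σ →₀ ℕ))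
    (hA' : ∀ g ∈ A', ∀ j, ¬ j ∈ T → g j = 0) (Q : Ideal (MvPolynomial σ K))
    (hQ : Q ∈ associatedPrimes (MvPolynomial σ K)
      (MvPolynomial σ K ⧸ Ideal.span ((fun d => monomial d (1 : K)) '' A'))) :
    Disjoint ((Wsub (K := K) T : Submonoid (MvPolynomial σ K)) : Set (MvPolynomial σ K))
      (Q : Set (MvPolynomial σ K)) := by
  set a := Ideal.span ((fun d => monomial d (1 : K)) '' A') with ha
  obtain ⟨hQp, x, hx⟩ := isAssociatedPrime_iff.1 hQ
  rw [Submodule.bot_colon'] at hx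
  obtain ⟨y, rfl⟩ := Ideal.Quotient.mk_surjective x
  have hy : ¬ y ∈ a := by
    intro h
    rw [Ideal.Quotient.eq_zero_iff_mem.2 h, Submodule.span_zero_singleton,
      Submodule.annihilator_bot] at hx
    exact hQp.ne_top hx
  haveI : Q.IsPrime := hQp
  have hle : Wsub (K := K) T ≤ Q.primeCompl := by
    rw [Wsub, Submonoid.closure_le]
    rintro _ ⟨j, hj, rfl⟩
    intro hXQ
    apply hy
    have hXy : (X j : MvPolynomial σ K) * y ∈ a := by
      rw [hx, SetLike.mem_coe, mem_ann_mk_iff'] at hXQ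
      exact hXQ
    rw [ha, mem_ideal_span_monomial_image] at hXy ⊢
    intro e he
    have hd : Finsupp.single j 1 + e ∈ (X j * y).support := by
      rw [support_X_mul]
      exact Finset.mem_map.2 ⟨e, he, rfl⟩
    obtain ⟨s, hs, hse⟩ := hXy _ hd
    refine ⟨s, hs, ?_⟩
    intro l
    by_cases hlj : l = j
    · subst hlj
      rw [hA' s hs l hj]
      exact Nat.zero_le _
    · have := hse l
      rwa [Finsupp.add_apply, Finsupp.single_eq_of_ne' (Ne.symm hlj), zero_add] at this
  rw [Set.disjoint_left]
  exact fun r hr hrQ => hle hr hrQ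

end MvAux2

section MvAux3
variable {K : Type*} [Field K] {σ : Type*}

lemma ext_eq (T : Set σ) (G : Set (σ →₀ ℕ)) (B : Type*) [CommRing B]
    [Algebra (MvPolynomial σ K) B] [IsLocalization (Wsub (K := K) T) B] :
    (Ideal.span ((fun d => monomial d (1 : K)) '' ((Finsupp.filter (· ∈ T)) '' G))).map
        (algebraMap (MvPolynomial σ K) B)
      = (Ideal.span ((fun d => monomial d (1 : K)) '' G)).map
        (algebraMap (MvPolynomial σ K) B) := by
  rw [Ideal.map_span, Ideal.map_span]
  apply le_antisymm <;> rw [Ideal.span_le]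
  · rintro _ ⟨_, ⟨_, ⟨d, hd, rfl⟩, rfl⟩, rfl⟩
    have hu : monomial ((Finsupp.filter (fun j => ¬ j ∈ T)) d) (1 : K) ∈ Wsub (K := K) T := by
      refine mono_mem_Wsub T _ fun j hj => ?_
      rw [Finsupp.support_filter, Finset.mem_filter] at hj
      exact hj.2
    show (algebraMap (MvPolynomial σ K) B) (monomial ((Finsupp.filter (· ∈ T)) d) (1 : K)) ∈
      Ideal.span (⇑(algebraMap (MvPolynomial σ K) B) '' ((fun d => monomial d (1 : K)) '' G))
    rw [← Ideal.unit_mul_mem_iff_mem _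
      (IsLocalization.map_units B (⟨_, hu⟩ : Wsub (K := K) T)), ← map_mul]
    have : (monomial ((Finsupp.filter (fun j => ¬ j ∈ T)) d) (1 : K)) *
        (monomial ((Finsupp.filter (· ∈ T)) d) (1 : K)) = monomial d 1 := by
      rw [mul_comm, ← monomial_filter_decomp]
    rw [show ((⟨_, hu⟩ : Wsub (K := K) T) : MvPolynomial σ K) =
      monomial ((Finsupp.filter (fun j => ¬ j ∈ T)) d) (1 : K) from rfl, this]
    exact Ideal.subset_span ⟨_, ⟨d, hd, rfl⟩, rfl⟩
  · rintro _ ⟨_, ⟨d, hd, rfl⟩, rfl⟩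
    show (algebraMap (MvPolynomial σ K) B) (monomial d (1 : K)) ∈
      Ideal.span (⇑(algebraMap (MvPolynomial σ K) B) ''
        ((fun d => monomial d (1 : K)) '' ((Finsupp.filter (· ∈ T)) '' G)))
    rw [monomial_filter_decomp T d, map_mul]
    exact Ideal.mul_mem_right _ _
      (Ideal.subset_span ⟨_, ⟨_, ⟨d, hd, rfl⟩, rfl⟩, rfl⟩)

end MvAux3


section MlocEq
variable {K : Type*} [Field K] {n : ℕ}

lemma mloc_span_eq (T : Set (Fin n)) (G : Set (Fin n →₀ ℕ)) :
    mloc (Ideal.span ((fun m => monomial m (1 : K)) '' G)) T =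
      Ideal.span ((fun d => monomial d (1 : K)) '' ((Finsupp.filter (· ∈ T)) '' G)) := by
  rw [mloc, Ideal.map_span]
  congr 1
  rw [Set.image_image, Set.image_image]
  refine Set.image_congr fun m _ => ?_
  show (aeval fun j => if j ∈ T then (X j : MvPolynomial (Fin n) K) else 1) (monomial m 1) = _
  exact aeval_if_monomial T m

end MlocEq

set_option maxHeartbeats 1000000 in
/-- If `I` is nearly normally torsion-free witnessed by the monomial prime
`p = (x_i : i ∈ S)`, then for every `i ∈ S` the monomial localization
`I(p \ {x_i})` is normally torsion-free. -/
theorem stmt0 {K : Type*} [Field K] {n : ℕ} (I : Ideal (MvPolynomial (Fin n) K))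
    (hmon : IsMonomialIdeal I) (S : Set (Fin n))
    (hwit : ∃ k : ℕ, 1 ≤ k ∧
      (∀ m : ℕ, 1 ≤ m → m ≤ k →
        associatedPrimes (MvPolynomial (Fin n) K) (MvPolynomial (Fin n) K ⧸ I ^ m) =
          I.minimalPrimes) ∧
      (∀ m : ℕ, k + 1 ≤ m →
        associatedPrimes (MvPolynomial (Fin n) K) (MvPolynomial (Fin n) K ⧸ I ^ m) ⊆
          I.minimalPrimes ∪ {Ideal.span (X '' S)})) :
    ∀ i ∈ S, IsNTF (mloc I (S \ {i})) := by
  obtain ⟨G, hG⟩ := hmon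
  intro i hi m hm Q hQ
  letI : DecidablePred (· ∈ (S \ {i})) := fun a => Classical.propDecidable _
  -- description of the localized ideal
  have hJ : mloc I (S \ {i}) = Ideal.span ((fun d => monomial d (1 : K)) ''
      ((Finsupp.filter (· ∈ (S \ {i}))) '' G)) := by
    rw [hG]
    exact mloc_span_eq (K := K) (S \ {i}) G
  have hG₁ : ∀ g ∈ (Finsupp.filter (· ∈ (S \ {i}))) '' G, ∀ j, ¬ j ∈ (S \ {i}) → g j = 0 := by
    rintro _ ⟨d, _, rfl⟩ j hj
    exact Finsupp.filter_apply_neg _ _ hj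
  obtain ⟨A', hA', hpow⟩ := span_mono_pow (K := K) (S \ {i}) _ hG₁ m
  have hQ'' : Q ∈ associatedPrimes (MvPolynomial (Fin n) K) (MvPolynomial (Fin n) K ⧸
      Ideal.span ((fun d => monomial d (1 : K)) '' A')) := by
    rwa [hJ, hpow] at hQ
  have hdisj : Disjoint ((Wsub (K := K) (S \ {i}) : Submonoid (MvPolynomial (Fin n) K)) :
      Set (MvPolynomial (Fin n) K)) (Q : Set (MvPolynomial (Fin n) K)) :=
    ass_disjoint_Wsub (S \ {i}) A' hA' Q hQ''
  have hQp : Q.IsPrime := hQ''.1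
  -- push to the localization and compare with I^m
  have h1 := assocPrime_map (Wsub (K := K) (S \ {i}))
    (Localization (Wsub (K := K) (S \ {i}))) (mloc I (S \ {i}) ^ m) Q hQ hdisj
  have hext : (mloc I (S \ {i})).map
        (algebraMap (MvPolynomial (Fin n) K) (Localization (Wsub (K := K) (S \ {i}))))
      = I.map (algebraMap (MvPolynomial (Fin n) K)
        (Localization (Wsub (K := K) (S \ {i})))) := by
    rw [hJ, hG]
    exact ext_eq (S \ {i}) G (Localization (Wsub (K := K) (S \ {i})))
  have hextm : (mloc I (S \ {i}) ^ m).map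
        (algebraMap (MvPolynomial (Fin n) K) (Localization (Wsub (K := K) (S \ {i}))))
      = (I ^ m).map (algebraMap (MvPolynomial (Fin n) K)
        (Localization (Wsub (K := K) (S \ {i})))) := by
    rw [Ideal.map_pow, Ideal.map_pow, hext]
  rw [hextm] at h1
  have h2 := assocPrime_comap (Wsub (K := K) (S \ {i}))
    (Localization (Wsub (K := K) (S \ {i}))) (I ^ m) _ h1
  rw [show Ideal.comap _ (Ideal.map _ Q) = Q from
    IsLocalization.under_map_of_isPrime_disjoint (Wsub (K := K) (S \ {i}))
    (Localization (Wsub (K := K) (S \ {i}))) hQp hdisj] at h2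
  -- use the near-NTF hypothesis
  obtain ⟨k, hk1, hEq, hSub⟩ := hwit
  have hQmin : Q ∈ I.minimalPrimes := by
    by_cases hmk : m ≤ k
    · rw [hEq m hm hmk] at h2
      exact h2
    · have hkm : k + 1 ≤ m := Nat.succ_le_of_lt (not_le.1 hmk)
      rcases hSub m hkm h2 with h | h
      · exact h
      · exfalso
        rw [Set.mem_singleton_iff] at h
        have hXiQ : (X i : MvPolynomial (Fin n) K) ∈ Q := by
          rw [h]
          exact Ideal.subset_span (Set.mem_image_of_mem _ hi)
        have hXiW : (X i : MvPolynomial (Fin n) K) ∈ Wsub (K := K) (S \ {i}) := by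
          refine Submonoid.subset_closure (Set.mem_image_of_mem _ ?_)
          intro hmem
          exact hmem.2 rfl
        exact Set.disjoint_left.1 hdisj hXiW hXiQ
  have hass1 : Q ∈ associatedPrimes (MvPolynomial (Fin n) K) (MvPolynomial (Fin n) K ⧸ I) := by
    have h := hEq 1 le_rfl hk1
    rw [pow_one] at h
    rw [h]
    exact hQmin
  have h3 := assocPrime_map (Wsub (K := K) (S \ {i}))
    (Localization (Wsub (K := K) (S \ {i}))) I Q hass1 hdisj
  rw [← hext] at h3
  have h4 := assocPrime_comap (Wsub (K := K) (S \ {i}))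
    (Localization (Wsub (K := K) (S \ {i}))) (mloc I (S \ {i})) _ h3
  rwa [show Ideal.comap _ (Ideal.map _ Q) = Q from
    IsLocalization.under_map_of_isPrime_disjoint (Wsub (K := K) (S \ {i}))
    (Localization (Wsub (K := K) (S \ {i}))) hQp hdisj] at h4
end

section
/- Let I be a monomial ideal in R = K[x_1,...,x_n] with Ass(R/I) = Min(I), and suppose that for every i = 1,...,n the monomial localization I(m \ {x_i}) is normally torsion-free, where m = (x_1,...,x_n). Then I is nearly normally torsion-free; more precisely, Ass(R/I^k) ⊆ Min(I) ∪ {m} for all k ≥ 1. -/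
open MvPolynomial
open scoped Classical

/-- A monomial prime ideal: generated by a set of variables. -/
def IsMonomialPrime {K : Type*} [Field K] {n : ℕ} (p : Ideal (MvPolynomial (Fin n) K)) : Prop :=
  ∃ S : Set (Fin n), p = Ideal.span (X '' S)

/-- Nearly normally torsion-free. -/
def IsNearlyNTF {K : Type*} [Field K] {n : ℕ} (I : Ideal (MvPolynomial (Fin n) K)) : Prop :=
  ∃ k : ℕ, 1 ≤ k ∧ ∃ p : Ideal (MvPolynomial (Fin n) K), IsMonomialPrime p ∧
    (∀ m : ℕ, 1 ≤ m → m ≤ k →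
      associatedPrimes (MvPolynomial (Fin n) K) (MvPolynomial (Fin n) K ⧸ I ^ m) =
        I.minimalPrimes) ∧
    (∀ m : ℕ, k + 1 ≤ m →
      associatedPrimes (MvPolynomial (Fin n) K) (MvPolynomial (Fin n) K ⧸ I ^ m) ⊆
        I.minimalPrimes ∪ {p})

/-! ### Auxiliary lemmas -/

/-- The annihilator of a cyclic submodule of a quotient ring. -/
lemma aux_mem_ann {R : Type*} [CommRing R] (A : Ideal R) (f p : R) :
    p ∈ (Submodule.span R {(Ideal.Quotient.mk A f : R ⧸ A)}).annihilator ↔ p * f ∈ A := by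
  rw [Submodule.mem_annihilator_span_singleton, Algebra.smul_def,
    ← Ideal.Quotient.algebraMap_eq, ← map_mul, Ideal.Quotient.algebraMap_eq,
    Ideal.Quotient.eq_zero_iff_mem]

lemma aux_mem_colon {R : Type*} [CommRing R] (A : Ideal R) (f p : R) :
    p ∈ (⊥ : Submodule R (R ⧸ A)).colon {(Ideal.Quotient.mk A f : R ⧸ A)} ↔ p * f ∈ A := by
  rw [Submodule.mem_colon_singleton, Submodule.mem_bot, Algebra.smul_def,
    ← Ideal.Quotient.algebraMap_eq, ← map_mul, Ideal.Quotient.algebraMap_eq,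
    Ideal.Quotient.eq_zero_iff_mem]

/-- Transfer of associated primes between ideals that agree up to a power of `x`. -/
lemma aux_ass_transfer {R : Type*} [CommRing R] [IsNoetherianRing R] {A B : Ideal R} {x : R} {P : Ideal R}
    (hAB : A ≤ B) (hBA : Ideal.span {x} * B ≤ A)
    (hx : x ∉ P)
    (hP : P ∈ associatedPrimes R (R ⧸ A)) : P ∈ associatedPrimes R (R ⧸ B) := by
  obtain ⟨hprime, y, hy⟩ := isAssociatedPrime_iff.mp hP
  obtain ⟨f, rfl⟩ := Ideal.Quotient.mk_surjective y
  have hPf : ∀ p, p ∈ P ↔ p * f ∈ A := by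
    intro p; rw [hy, aux_mem_colon]
  refine isAssociatedPrime_iff.mpr ⟨hprime, Ideal.Quotient.mk B (x * f), ?_⟩
  ext p
  rw [aux_mem_colon]
  constructor
  · intro hp
    have h1 : x * (p * f) ∈ B := Ideal.mul_mem_left B x (hAB ((hPf p).mp hp))
    have heq : p * (x * f) = x * (p * f) := by ring
    rw [heq]; exact h1
  · intro hp
    have h2 : x * (p * (x * f)) ∈ Ideal.span {x} * B :=
      Ideal.mul_mem_mul (Ideal.mem_span_singleton_self x) hp
    have h3 : (x * x * p) * f ∈ A := by
      have := hBA h2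
      convert this using 1; ring
    have h4 : x * x * p ∈ P := (hPf _).mpr h3
    rcases hprime.mem_or_mem h4 with h | h
    · rcases hprime.mem_or_mem h with h | h <;> exact absurd h hx
    · exact h

/-- Transfer in the other direction. -/
lemma aux_ass_transfer' {R : Type*} [CommRing R] [IsNoetherianRing R] {A B : Ideal R} {x : R} {P : Ideal R}
    (hAB : A ≤ B) (hBA : Ideal.span {x} * B ≤ A)
    (hx : x ∉ P)
    (hP : P ∈ associatedPrimes R (R ⧸ B)) : P ∈ associatedPrimes R (R ⧸ A) := by
  obtain ⟨hprime, y, hy⟩ := isAssociatedPrime_iff.mp hP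
  obtain ⟨h, rfl⟩ := Ideal.Quotient.mk_surjective y
  have hPf : ∀ p, p ∈ P ↔ p * h ∈ B := by
    intro p; rw [hy, aux_mem_colon]
  refine isAssociatedPrime_iff.mpr ⟨hprime, Ideal.Quotient.mk A (x * h), ?_⟩
  ext p
  rw [aux_mem_colon]
  constructor
  · intro hp
    have h1 : x * (p * h) ∈ Ideal.span {x} * B :=
      Ideal.mul_mem_mul (Ideal.mem_span_singleton_self x) ((hPf p).mp hp)
    have heq : p * (x * h) = x * (p * h) := by ring
    rw [heq]; exact hBA h1
  · intro hp
    have h1 : (p * x) * h ∈ B := by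
      have := hAB hp
      convert this using 1; ring
    have h2 : p * x ∈ P := (hPf _).mpr h1
    rcases hprime.mem_or_mem h2 with h | h
    · exact h
    · exact absurd h hx

/-- The substitution map sending `X i ↦ 1` and fixing the other variables. -/
noncomputable def phi (K : Type*) [Field K] (n : ℕ) (i : Fin n) :
    Fin n → MvPolynomial (Fin n) K :=
  fun j => if j ∈ ({i}ᶜ : Set (Fin n)) then X j else 1

lemma aux_phi_monomial (K : Type*) [Field K] (n : ℕ) (i : Fin n) (a : Fin n →₀ ℕ) :
    X i ^ (a i) * aeval (phi K n i) (monomial a (1 : K)) = monomial a 1 := by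
  have hsplit : monomial a (1 : K) = monomial (a.erase i) 1 * X i ^ (a i) := by
    rw [X_pow_eq_monomial, monomial_mul, mul_one, Finsupp.erase_add_single]
  have hphi_i : phi K n i i = 1 := by simp [phi]
  have herase : aeval (phi K n i) (monomial (a.erase i) (1 : K)) = monomial (a.erase i) 1 := by
    rw [aeval_monomial, map_one, one_mul, Finsupp.prod, ← prod_X_pow_eq_monomial]
    refine Finset.prod_congr rfl fun j hj => ?_
    rw [Finsupp.support_erase] at hj
    have hne : j ≠ i := Finset.ne_of_mem_erase hj
    simp [phi, hne]
  rw [hsplit, map_mul, map_pow, aeval_X, hphi_i, one_pow, mul_one, herase, mul_comm,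
    X_pow_eq_monomial, monomial_mul, mul_one, Finsupp.erase_add_single]

/-- A uniform exponent works for a finite set. -/
lemma aux_uniform {K : Type*} [Field K] {n : ℕ} (i : Fin n)
    (f : MvPolynomial (Fin n) K → MvPolynomial (Fin n) K)
    (T : Finset (MvPolynomial (Fin n) K))
    (h : ∀ t ∈ T, ∃ e : ℕ, X i ^ e * f t = t) :
    ∃ N : ℕ, ∀ t ∈ T, X i ^ N * f t ∈ Ideal.span (T : Set (MvPolynomial (Fin n) K)) := by
  classical
  revert h
  induction T using Finset.induction_on with
  | empty => intro _; exact ⟨0, by simp⟩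
  | @insert a s ha ih =>
    intro h
    obtain ⟨N, hN⟩ := ih (fun t ht => h t (Finset.mem_insert_of_mem ht))
    obtain ⟨e, he⟩ := h a (Finset.mem_insert_self a s)
    refine ⟨N + e, fun t ht => ?_⟩
    rcases Finset.mem_insert.mp ht with rfl | ht
    · have heq : X i ^ (N + e) * f t = X i ^ N * (X i ^ e * f t) := by ring
      rw [heq, he]
      exact Ideal.mul_mem_left _ _
        (Ideal.subset_span (Finset.mem_coe.mpr (Finset.mem_insert_self t s)))
    · have heq : X i ^ (N + e) * f t = X i ^ e * (X i ^ N * f t) := by ring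
      rw [heq]
      exact Ideal.mul_mem_left _ _
        (Ideal.span_mono (Finset.coe_subset.mpr (Finset.subset_insert a s)) (hN t ht))

/-- A monomial ideal has a finite generating set of monomials. -/
lemma aux_finite_gens {K : Type*} [Field K] {n : ℕ} (I : Ideal (MvPolynomial (Fin n) K))
    (hmon : IsMonomialIdeal I) :
    ∃ T : Finset (MvPolynomial (Fin n) K),
      (∀ t ∈ T, ∃ a : Fin n →₀ ℕ, t = monomial a 1) ∧
      I = Ideal.span (T : Set (MvPolynomial (Fin n) K)) := by
  classical
  obtain ⟨G, hG⟩ := hmon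
  obtain ⟨s, hs⟩ := IsNoetherian.noetherian I
  have hmem : ∀ g ∈ s, ∃ t : Finset (MvPolynomial (Fin n) K),
      (↑t : Set (MvPolynomial (Fin n) K)) ⊆ ((fun m => monomial m (1 : K)) '' G) ∧
      g ∈ Ideal.span (t : Set (MvPolynomial (Fin n) K)) := by
    intro g hg
    have : g ∈ Ideal.span ((fun m => monomial m (1 : K)) '' G) := by
      rw [← hG, ← hs]; exact Ideal.subset_span hg
    obtain ⟨t, h1, h2⟩ := Submodule.mem_span_finite_of_mem_span this
    exact ⟨t, h1, h2⟩
  choose F hF1 hF2 using hmem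
  refine ⟨s.attach.biUnion (fun g => F g.1 g.2), ?_, ?_⟩
  · intro t ht
    rw [Finset.mem_biUnion] at ht
    obtain ⟨g, _, htg⟩ := ht
    obtain ⟨a, _, rfl⟩ := hF1 g.1 g.2 (Finset.mem_coe.mpr htg)
    exact ⟨a, rfl⟩
  · apply le_antisymm
    · conv_lhs => rw [← hs]
      rw [Submodule.span_le]
      intro g hg
      rw [SetLike.mem_coe]
      have hg' : g ∈ s := hg
      refine Ideal.span_mono ?_ (hF2 g hg')
      intro x hx
      exact Finset.mem_coe.mpr
        (Finset.mem_biUnion.mpr ⟨⟨g, hg'⟩, Finset.mem_attach _ _, Finset.mem_coe.mp hx⟩)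
    · rw [Ideal.span_le]
      intro x hx
      rw [Finset.mem_coe, Finset.mem_biUnion] at hx
      obtain ⟨g, _, hxg⟩ := hx
      have hx2 : x ∈ ((fun m => monomial m (1 : K)) '' G) := hF1 g.1 g.2 (Finset.mem_coe.mpr hxg)
      rw [SetLike.mem_coe, hG]
      exact Ideal.subset_span hx2

/-- The key comparison between `I` and its monomial localization. -/
lemma aux_key {K : Type*} [Field K] {n : ℕ} (I : Ideal (MvPolynomial (Fin n) K))
    (hmon : IsMonomialIdeal I) (i : Fin n) :
    ∃ N : ℕ, I ≤ mloc I ({i}ᶜ) ∧ Ideal.span {X i ^ N} * mloc I ({i}ᶜ) ≤ I := by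
  obtain ⟨T, hTmon, hTspan⟩ := aux_finite_gens I hmon
  set f : MvPolynomial (Fin n) K →+* MvPolynomial (Fin n) K := (aeval (phi K n i)).toRingHom with hf
  have hmloc : mloc I ({i}ᶜ) = Ideal.map f I := by
    unfold mloc
    rw [hf]
    congr 1
    congr 1
    refine congrArg aeval (funext fun j => ?_)
    unfold phi
    by_cases hj : j ∈ ({i}ᶜ : Set (Fin n))
    · rw [if_pos hj, if_pos hj]
    · rw [if_neg hj, if_neg hj]
  have hJ : mloc I ({i}ᶜ) = Ideal.span (f '' (T : Set (MvPolynomial (Fin n) K))) := by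
    rw [hmloc, hTspan, Ideal.map_span]
  have hper : ∀ t ∈ T, ∃ e : ℕ, X i ^ e * f t = t := by
    intro t ht
    obtain ⟨a, rfl⟩ := hTmon t ht
    exact ⟨a i, aux_phi_monomial K n i a⟩
  obtain ⟨N, hN⟩ := aux_uniform i f T hper
  refine ⟨N, ?_, ?_⟩
  · conv_lhs => rw [hTspan]
    rw [Ideal.span_le]
    intro t ht
    rw [SetLike.mem_coe]
    obtain ⟨e, he⟩ := hper t (Finset.mem_coe.mp ht)
    rw [← he]
    exact Ideal.mul_mem_left _ _ (hJ ▸ Ideal.subset_span ⟨t, ht, rfl⟩)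
  · rw [hJ, Ideal.span_singleton_mul_le_iff]
    intro z hz
    have hcolon : Ideal.span (f '' (T : Set (MvPolynomial (Fin n) K))) ≤
        I.colon ((Ideal.span {X i ^ N} : Ideal (MvPolynomial (Fin n) K)) : Set (MvPolynomial (Fin n) K)) := by
      rw [Ideal.span_le]
      rintro _ ⟨t, ht, rfl⟩
      rw [SetLike.mem_coe, Ideal.mem_colon_span_singleton, mul_comm, hTspan]
      exact hN t (Finset.mem_coe.mp ht)
    have := hcolon hz
    rw [Ideal.mem_colon_span_singleton] at this
    rwa [mul_comm]

/-- A proper ideal containing all the variables is the irrelevant maximal ideal. -/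
lemma aux_top_case {K : Type*} [Field K] {n : ℕ} (P : Ideal (MvPolynomial (Fin n) K))
    (hP : P.IsPrime) (hall : ∀ i : Fin n, X i ∈ P) :
    P = Ideal.span (Set.range (X : Fin n → MvPolynomial (Fin n) K)) := by
  have hle : Ideal.span (Set.range (X : Fin n → MvPolynomial (Fin n) K)) ≤ P := by
    rw [Ideal.span_le]
    rintro _ ⟨i, rfl⟩
    exact hall i
  have key : ∀ g : MvPolynomial (Fin n) K, g - C (coeff 0 g) ∈
      Ideal.span (Set.range (X : Fin n → MvPolynomial (Fin n) K)) := by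
    intro g
    rw [← Set.image_univ, mem_ideal_span_X_image]
    intro m hm
    by_contra hcon
    push_neg at hcon
    have hm0 : m = 0 := by
      ext j; exact hcon j (Set.mem_univ j)
    rw [hm0, mem_support_iff] at hm
    apply hm
    simp [coeff_C]
  refine le_antisymm ?_ hle
  intro g hg
  have hC : C (coeff 0 g) ∈ P := by
    have heq : C (coeff 0 g) = g - (g - C (coeff 0 g)) := by ring
    rw [heq]
    exact Ideal.sub_mem P hg (hle (key g))
  by_cases hc : coeff 0 g = 0
  · have := key g
    rw [hc, map_zero, sub_zero] at this
    exact this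
  · exfalso
    have hu : IsUnit (C (coeff 0 g) : MvPolynomial (Fin n) K) :=
      (isUnit_iff_ne_zero.mpr hc).map C
    exact hP.ne_top (Ideal.eq_top_of_isUnit_mem P hC hu)

/-- If `Ass(R/I) = Min(I)` and every monomial localization `I(m \ {x_i})` is
normally torsion-free, then `I` is nearly normally torsion-free; more precisely,
`Ass(R/I^k) ⊆ Min(I) ∪ {m}` for all `k ≥ 1`, where `m = (x_1,…,x_n)`. -/
theorem stmt1 {K : Type*} [Field K] {n : ℕ} (I : Ideal (MvPolynomial (Fin n) K))
    (hmon : IsMonomialIdeal I)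
    (hass : associatedPrimes (MvPolynomial (Fin n) K) (MvPolynomial (Fin n) K ⧸ I) =
      I.minimalPrimes)
    (hloc : ∀ i : Fin n, IsNTF (mloc I ({i}ᶜ))) :
    IsNearlyNTF I ∧
      ∀ k : ℕ, 1 ≤ k →
        associatedPrimes (MvPolynomial (Fin n) K) (MvPolynomial (Fin n) K ⧸ I ^ k) ⊆
          I.minimalPrimes ∪ {Ideal.span (Set.range (X : Fin n → MvPolynomial (Fin n) K))} := by
  have main : ∀ k : ℕ, 1 ≤ k →
      associatedPrimes (MvPolynomial (Fin n) K) (MvPolynomial (Fin n) K ⧸ I ^ k) ⊆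
        I.minimalPrimes ∪ {Ideal.span (Set.range (X : Fin n → MvPolynomial (Fin n) K))} := by
    intro k hk P hP
    have hprime : P.IsPrime := hP.1
    by_cases hall : ∀ i : Fin n, X i ∈ P
    · right
      exact Set.mem_singleton_iff.mpr (aux_top_case P hprime hall)
    · push_neg at hall
      obtain ⟨i, hi⟩ := hall
      left
      obtain ⟨N, hIJ, hJI⟩ := aux_key I hmon i
      have hIkJk : I ^ k ≤ (mloc I ({i}ᶜ)) ^ k := Ideal.pow_right_mono hIJ k
      have hJkIk : Ideal.span {(X i ^ N) ^ k} * (mloc I ({i}ᶜ)) ^ k ≤ I ^ k := by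
        have h1 : (Ideal.span {X i ^ N} * mloc I ({i}ᶜ)) ^ k ≤ I ^ k :=
          Ideal.pow_right_mono hJI k
        rwa [mul_pow, Ideal.span_singleton_pow] at h1
      have hxP : (X i ^ N) ^ k ∉ P := fun h =>
        hi (hprime.mem_of_pow_mem _ (hprime.mem_of_pow_mem _ h))
      have h1 := aux_ass_transfer hIkJk hJkIk hxP hP
      have h2 := hloc i k hk h1
      have hxP1 : X i ^ N ∉ P := fun h => hi (hprime.mem_of_pow_mem _ h)
      have h3 := aux_ass_transfer' hIJ hJI hxP1 h2
      rw [hass] at h3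
      exact h3
  refine ⟨?_, main⟩
  refine ⟨1, le_refl 1, Ideal.span (Set.range (X : Fin n → MvPolynomial (Fin n) K)),
    ⟨Set.univ, by rw [Set.image_univ]⟩, ?_, ?_⟩
  · intro m h1 h2
    have hm1 : m = 1 := le_antisymm h2 h1
    subst hm1
    rw [pow_one]
    exact hass
  · intro m hm
    exact main m (le_trans (by norm_num) hm)
end

section
/- Let R = K[x_1, x_2, x_3] and I = (x_2^4, x_1 x_2^3, x_1^3 x_2, x_1^4 x_3). Then for every m ≥ 2, (I^m : x_1^{3m-1} x_2^{m+1}) = (x_1, x_2, x_3); in particular (x_1, x_2, x_3) ∈ Ass(R/I^m) for all m ≥ 2. -/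
open MvPolynomial

/-- The ideal `I = (x₂⁴, x₁x₂³, x₁³x₂, x₁⁴x₃)` of `K[x₁,x₂,x₃]`
(variables `X 0 = x₁`, `X 1 = x₂`, `X 2 = x₃`). -/
noncomputable def exIdeal (K : Type*) [Field K] : Ideal (MvPolynomial (Fin 3) K) :=
  Ideal.span {X 1 ^ 4, X 0 * X 1 ^ 3, X 0 ^ 3 * X 1, X 0 ^ 4 * X 2}

namespace Stmt5Aux

variable {K : Type*} [Field K]

lemma mono_eq {K : Type*} [Field K] (i j : Fin 3) (a b : ℕ) :
    monomial (Finsupp.single i a + Finsupp.single j b) (1 : K) =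
      (X i ^ a * X j ^ b : MvPolynomial (Fin 3) K) := by
  rw [show ((1 : K) = 1 * 1) from (one_mul 1).symm, ← monomial_mul,
    X_pow_eq_monomial, X_pow_eq_monomial]

lemma gen_monomials :
    exIdeal K = Ideal.span ((fun s => monomial s (1 : K)) ''
      {Finsupp.single 1 4,
       Finsupp.single 0 1 + Finsupp.single 1 3,
       Finsupp.single 0 3 + Finsupp.single 1 1,
       Finsupp.single 0 4 + Finsupp.single 2 1}) := by
  rw [exIdeal]
  congr 1
  rw [Set.image_insert_eq, Set.image_insert_eq, Set.image_insert_eq, Set.image_singleton]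
  rw [X_pow_eq_monomial (n := (1 : Fin 3)) (e := 4), mono_eq, mono_eq, mono_eq]
  simp only [pow_one]

/-- Every monomial appearing in an element of `I^m` is divisible by a product of
`m` generators (recorded via the multiplicities `a b c e`). -/
lemma pow_support_bound (m : ℕ) (f : MvPolynomial (Fin 3) K)
    (hf : f ∈ exIdeal K ^ m) :
    ∀ d ∈ f.support, ∃ a b c e : ℕ, a + b + c + e = m ∧
      b + 3 * c + 4 * e ≤ d 0 ∧ 4 * a + 3 * b + c ≤ d 1 ∧ e ≤ d 2 := by
  classical
  induction m generalizing f with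
  | zero =>
    intro d hd
    exact ⟨0, 0, 0, 0, by omega, by omega, by omega, by omega⟩
  | succ n ih =>
    rw [pow_succ] at hf
    refine Submodule.mul_induction_on hf ?_ ?_
    · intro p hp q hq d hd
      have hsub := MvPolynomial.support_mul p q hd
      obtain ⟨dp, hdp, dq, hdq, rfl⟩ := Finset.mem_add.mp hsub
      obtain ⟨a, b, c, e, hsum, h0, h1, h2⟩ := ih p hp dp hdp
      rw [gen_monomials] at hq
      obtain ⟨si, hsi, hle⟩ := mem_ideal_span_monomial_image.mp hq dq hdq
      have hle0 : si 0 ≤ dq 0 := hle 0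
      have hle1 : si 1 ≤ dq 1 := hle 1
      have hle2 : si 2 ≤ dq 2 := hle 2
      have happ : ∀ i, (dp + dq) i = dp i + dq i := fun i => Finsupp.add_apply dp dq i
      simp only [Set.mem_insert_iff, Set.mem_singleton_iff] at hsi
      rcases hsi with rfl | rfl | rfl | rfl
      · have k1 : 4 ≤ dq 1 := by
          have := hle0; have h := hle1
          simp [Finsupp.single_apply] at h; omega
        refine ⟨a + 1, b, c, e, by omega, ?_, ?_, ?_⟩ <;>
          simp only [Finsupp.add_apply] <;> omega
      · have k0 : 1 ≤ dq 0 := by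
          have h := hle0; simp [Finsupp.add_apply, Finsupp.single_apply] at h; omega
        have k1 : 3 ≤ dq 1 := by
          have h := hle1; simp [Finsupp.add_apply, Finsupp.single_apply] at h; omega
        refine ⟨a, b + 1, c, e, by omega, ?_, ?_, ?_⟩ <;>
          simp only [Finsupp.add_apply] <;> omega
      · have k0 : 3 ≤ dq 0 := by
          have h := hle0; simp [Finsupp.add_apply, Finsupp.single_apply] at h; omega
        have k1 : 1 ≤ dq 1 := by
          have h := hle1; simp [Finsupp.add_apply, Finsupp.single_apply] at h; omega
        refine ⟨a, b, c + 1, e, by omega, ?_, ?_, ?_⟩ <;>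
          simp only [Finsupp.add_apply] <;> omega
      · have k0 : 4 ≤ dq 0 := by
          have h := hle0; simp [Finsupp.add_apply, Finsupp.single_apply] at h; omega
        have k2 : 1 ≤ dq 2 := by
          have h := hle2; simp [Finsupp.add_apply, Finsupp.single_apply] at h; omega
        refine ⟨a, b, c, e + 1, by omega, ?_, ?_, ?_⟩ <;>
          simp only [Finsupp.add_apply] <;> omega
    · intro x y hx hy d hd
      rcases Finset.mem_union.mp (Finsupp.support_add hd) with h | h
      · exact hx d h
      · exact hy d h

/-- A polynomial with zero constant term lies in `(X 0, X 1, X 2)`. -/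
lemma mem_span_X_of_constantCoeff_eq_zero {r : MvPolynomial (Fin 3) K}
    (hr : constantCoeff r = 0) :
    r ∈ Ideal.span {(X 0 : MvPolynomial (Fin 3) K), X 1, X 2} := by
  have hset : (MvPolynomial.X '' (Set.univ : Set (Fin 3)) : Set (MvPolynomial (Fin 3) K)) =
      {X 0, X 1, X 2} := by
    ext y
    simp only [Set.image_univ, Set.mem_range, Set.mem_insert_iff, Set.mem_singleton_iff]
    constructor
    · rintro ⟨i, rfl⟩; fin_cases i <;> simp
    · rintro (rfl | rfl | rfl)
      exacts [⟨0, rfl⟩, ⟨1, rfl⟩, ⟨2, rfl⟩]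
  rw [← hset, mem_ideal_span_X_image]
  intro d hd
  by_contra hcon
  push_neg at hcon
  have hd0 : d = 0 := by
    ext i
    exact hcon i (Set.mem_univ i)
  rw [hd0] at hd
  exact (MvPolynomial.mem_support_iff.mp hd) hr

end Stmt5Aux

/-- For all `m ≥ 2`, `(Iᵐ : x₁^{3m-1} x₂^{m+1}) = (x₁,x₂,x₃)`; in particular
`(x₁,x₂,x₃) ∈ Ass(R/Iᵐ)`. -/
theorem stmt5 (K : Type*) [Field K] (m : ℕ) (hm : 2 ≤ m) :
    Submodule.colon (exIdeal K ^ m)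
        ((Ideal.span {X 0 ^ (3 * m - 1) * X 1 ^ (m + 1)} : Ideal (MvPolynomial (Fin 3) K)) :
          Set (MvPolynomial (Fin 3) K)) =
      Ideal.span {(X 0 : MvPolynomial (Fin 3) K), X 1, X 2} ∧
    Ideal.span {(X 0 : MvPolynomial (Fin 3) K), X 1, X 2} ∈
      associatedPrimes (MvPolynomial (Fin 3) K)
        (MvPolynomial (Fin 3) K ⧸ exIdeal K ^ m) := by
  classical
  obtain ⟨k, rfl⟩ : ∃ k, m = k + 2 := ⟨m - 2, by omega⟩
  set R := MvPolynomial (Fin 3) K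
  have hexp : 3 * (k + 2) - 1 = 3 * k + 5 := by omega
  rw [hexp]
  set v : R := X 0 ^ (3 * k + 5) * X 1 ^ (k + 3) with hv
  set p : Ideal R := Ideal.span {(X 0 : R), X 1, X 2} with hp
  set I : Ideal R := exIdeal K with hI
  -- generators lie in I
  have hg1 : (X 1 ^ 4 : R) ∈ I := Ideal.subset_span (by simp)
  have hg2 : (X 0 * X 1 ^ 3 : R) ∈ I := Ideal.subset_span (by simp)
  have hg3 : (X 0 ^ 3 * X 1 : R) ∈ I := Ideal.subset_span (by simp)
  have hg4 : (X 0 ^ 4 * X 2 : R) ∈ I := Ideal.subset_span (by simp)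
  -- the exponent of v
  set dv : Fin 3 →₀ ℕ := Finsupp.single 0 (3 * k + 5) + Finsupp.single 1 (k + 3) with hdv
  have hvmono : v = monomial dv (1 : K) := by
    rw [hv, hdv, Stmt5Aux.mono_eq]
  have hdv0 : dv 0 = 3 * k + 5 := by simp [hdv, Finsupp.add_apply, Finsupp.single_apply]
  have hdv1 : dv 1 = k + 3 := by simp [hdv, Finsupp.add_apply, Finsupp.single_apply]
  have hdv2 : dv 2 = 0 := by simp [hdv, Finsupp.add_apply, Finsupp.single_apply]
  -- key numeric impossibility
  have hnum : ¬ ∃ a b c e : ℕ, a + b + c + e = k + 2 ∧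
      b + 3 * c + 4 * e ≤ dv 0 ∧ 4 * a + 3 * b + c ≤ dv 1 ∧ e ≤ dv 2 := by
    rw [hdv0, hdv1, hdv2]
    rintro ⟨a, b, c, e, h⟩
    omega
  -- colon ≤ p
  have hcolon_le : Submodule.colon (I ^ (k + 2)) (Ideal.span {v}) ≤ p := by
    intro r hr
    have hrv : r * v ∈ I ^ (k + 2) := Ideal.mem_colon_span_singleton.mp hr
    have hcc : constantCoeff r = 0 := by
      by_contra h0
      have hdmem : dv ∈ (r * v).support := by
        rw [MvPolynomial.mem_support_iff, hvmono]
        have : coeff (0 + dv) (r * monomial dv (1 : K)) = coeff 0 r * 1 :=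
          coeff_mul_monomial 0 dv 1 r
        rw [zero_add] at this
        rw [this, mul_one]
        exact h0
      exact hnum (Stmt5Aux.pow_support_bound (k + 2) (r * v) hrv dv hdmem)
    exact Stmt5Aux.mem_span_X_of_constantCoeff_eq_zero hcc
  -- p ≤ colon
  have hp_le : p ≤ Submodule.colon (I ^ (k + 2)) (Ideal.span {v}) := by
    rw [hp, Ideal.span_le]
    intro x hx
    simp only [Set.mem_insert_iff, Set.mem_singleton_iff] at hx
    rcases hx with rfl | rfl | rfl
    · refine SetLike.mem_coe.mpr (Ideal.mem_colon_span_singleton.mpr ?_)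
      have hmem : (X 0 ^ 3 * X 1 : R) ^ (k + 2) ∈ I ^ (k + 2) := Ideal.pow_mem_pow hg3 _
      have heq : (X 0 : R) * v = X 1 * (X 0 ^ 3 * X 1) ^ (k + 2) := by
        rw [hv]; ring
      rw [heq]
      exact Ideal.mul_mem_left _ _ hmem
    · refine SetLike.mem_coe.mpr (Ideal.mem_colon_span_singleton.mpr ?_)
      have hmem : (X 0 ^ 3 * X 1 : R) ^ (k + 1) * (X 0 * X 1 ^ 3) ∈ I ^ (k + 1) * I :=
        Ideal.mul_mem_mul (Ideal.pow_mem_pow hg3 _) hg2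
      rw [← pow_succ] at hmem
      have heq : (X 1 : R) * v = X 0 * ((X 0 ^ 3 * X 1) ^ (k + 1) * (X 0 * X 1 ^ 3)) := by
        rw [hv]; ring
      rw [heq]
      exact Ideal.mul_mem_left _ _ hmem
    · refine SetLike.mem_coe.mpr (Ideal.mem_colon_span_singleton.mpr ?_)
      have hmem : ((X 0 ^ 3 * X 1 : R) ^ k * (X 0 * X 1 ^ 3)) * (X 0 ^ 4 * X 2) ∈
          (I ^ k * I) * I :=
        Ideal.mul_mem_mul (Ideal.mul_mem_mul (Ideal.pow_mem_pow hg3 _) hg2) hg4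
      rw [← pow_succ, ← pow_succ] at hmem
      have heq : (X 2 : R) * v = ((X 0 ^ 3 * X 1) ^ k * (X 0 * X 1 ^ 3)) * (X 0 ^ 4 * X 2) := by
        rw [hv]; ring
      rw [heq]
      exact hmem
  have hcolon : Submodule.colon (I ^ (k + 2)) (Ideal.span {v}) = p :=
    le_antisymm hcolon_le hp_le
  -- p is maximal (kernel of constantCoeff)
  have hker : p = RingHom.ker (constantCoeff : R →+* K) := by
    apply le_antisymm
    · rw [hp, Ideal.span_le]
      intro x hx
      simp only [Set.mem_insert_iff, Set.mem_singleton_iff] at hx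
      rcases hx with rfl | rfl | rfl <;> exact SetLike.mem_coe.mpr (RingHom.mem_ker.mpr (constantCoeff_X K _))
    · intro r hr
      exact Stmt5Aux.mem_span_X_of_constantCoeff_eq_zero (RingHom.mem_ker.mp hr)
  have hsurj : Function.Surjective (constantCoeff : R →+* K) := fun a =>
    ⟨C a, constantCoeff_C (Fin 3) a⟩
  have hmax : p.IsMaximal := by
    rw [hker]
    exact RingHom.ker_isMaximal_of_surjective _ hsurj
  refine ⟨hcolon, hmax.isPrime, Ideal.Quotient.mk (I ^ (k + 2)) v, ?_⟩
  -- p = annihilator of the class of v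
  suffices hann : (⊥ : Submodule R (R ⧸ I ^ (k + 2))).colon
      {Ideal.Quotient.mk (I ^ (k + 2)) v} = p by
    rw [hann, hmax.isPrime.radical]
  ext r
  rw [Submodule.mem_colon_singleton, Submodule.mem_bot]
  have hsmul : r • (Ideal.Quotient.mk (I ^ (k + 2)) v) = Ideal.Quotient.mk (I ^ (k + 2)) (r * v) := by
    rw [← Ideal.Quotient.mk_eq_mk, ← Ideal.Quotient.mk_eq_mk, ← Submodule.Quotient.mk_smul,
      smul_eq_mul]
  rw [hsmul, Ideal.Quotient.eq_zero_iff_mem, ← Ideal.mem_colon_span_singleton, hcolon]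
end

section
/- Let R = K[x_1, x_2, x_3] and I = (x_2^4, x_1 x_2^3, x_1^3 x_2, x_1^4 x_3). Then the monomial x_1^{3m-1} x_2^{m+1} does not lie in I^m for any m ≥ 2. -/
open MvPolynomial

open Pointwise

/-- set of sums of `m` elements of `S` -/
def sumSet (S : Set (Fin 3 →₀ ℕ)) : ℕ → Set (Fin 3 →₀ ℕ)
  | 0 => {0}
  | m + 1 => S + sumSet S m

lemma img_mul {K : Type*} [Field K] (A B : Set (Fin 3 →₀ ℕ)) :
    ((fun d => monomial d (1 : K)) '' A) * ((fun d => monomial d (1 : K)) '' B) =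
      (fun d => monomial d (1 : K)) '' (A + B) := by
  ext x
  simp only [Set.mem_mul, Set.mem_image, Set.mem_add]
  constructor
  · rintro ⟨-, ⟨a, ha, rfl⟩, -, ⟨b, hb, rfl⟩, rfl⟩
    exact ⟨a + b, ⟨a, ha, b, hb, rfl⟩, by simp [monomial_mul]⟩
  · rintro ⟨-, ⟨a, ha, b, hb, rfl⟩, rfl⟩
    exact ⟨_, ⟨a, ha, rfl⟩, _, ⟨b, hb, rfl⟩, by simp [monomial_mul]⟩

lemma ideal_span_pow {K : Type*} [Field K] (s : Set (MvPolynomial (Fin 3) K)) (n : ℕ) :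
    Ideal.span s ^ n = Ideal.span (s ^ n) := Submodule.span_pow s n

lemma img_pow {K : Type*} [Field K] (S : Set (Fin 3 →₀ ℕ)) (m : ℕ) :
    ((fun d => monomial d (1 : K)) '' S) ^ m =
      (fun d => monomial d (1 : K)) '' (sumSet S m) := by
  induction m with
  | zero =>
    rw [pow_zero, sumSet, Set.image_singleton]
    simp [← Set.singleton_one]
  | succ n ih => rw [pow_succ, ih, mul_comm, img_mul, sumSet]

/-- The monomial `x₁^{3m-1} x₂^{m+1}` does not lie in `Iᵐ` for any `m ≥ 2`. -/
theorem stmt6 (K : Type*) [Field K] (m : ℕ) (hm : 2 ≤ m) :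
    (X 0 : MvPolynomial (Fin 3) K) ^ (3 * m - 1) * X 1 ^ (m + 1) ∉ exIdeal K ^ m := by
  set g1 : Fin 3 →₀ ℕ := Finsupp.single 1 4 with hg1
  set g2 : Fin 3 →₀ ℕ := Finsupp.single 0 1 + Finsupp.single 1 3 with hg2
  set g3 : Fin 3 →₀ ℕ := Finsupp.single 0 3 + Finsupp.single 1 1 with hg3
  set g4 : Fin 3 →₀ ℕ := Finsupp.single 0 4 + Finsupp.single 2 1 with hg4
  set S : Set (Fin 3 →₀ ℕ) := {g1, g2, g3, g4} with hS
  -- characterization of sumSet S m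
  have hsum : ∀ n, ∀ t ∈ sumSet S n, ∃ a b c d : ℕ,
      a + b + c + d = n ∧ t = a • g1 + b • g2 + c • g3 + d • g4 := by
    intro n
    induction n with
    | zero =>
      rintro t ht
      exact ⟨0, 0, 0, 0, rfl, by simpa [sumSet] using ht⟩
    | succ n ih =>
      rintro t ht
      obtain ⟨s, hs, u, hu, rfl⟩ := ht
      obtain ⟨a, b, c, d, habcd, rfl⟩ := ih u hu
      rcases hs with rfl | rfl | rfl | rfl
      · exact ⟨a + 1, b, c, d, by omega, by module⟩
      · exact ⟨a, b + 1, c, d, by omega, by module⟩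
      · exact ⟨a, b, c + 1, d, by omega, by module⟩
      · exact ⟨a, b, c, d + 1, by omega, by module⟩
  have hI : exIdeal K = Ideal.span ((fun d => monomial d (1 : K)) '' S) := by
    rw [exIdeal, hS]
    congr 1
    simp only [Set.image_insert_eq, Set.image_singleton, hg1, hg2, hg3, hg4]
    congr 1 <;> [skip; congr 1] <;> [skip; skip; congr 1]
    all_goals simp [X_pow_eq_monomial, X, monomial_mul, monomial_pow, Finsupp.smul_single]
  intro hmem
  rw [hI, ideal_span_pow, img_pow, mem_ideal_span_monomial_image] at hmem
  have hmono : (X 0 : MvPolynomial (Fin 3) K) ^ (3 * m - 1) * X 1 ^ (m + 1) =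
      monomial (Finsupp.single 0 (3 * m - 1) + Finsupp.single 1 (m + 1)) 1 := by
    simp [X_pow_eq_monomial, monomial_mul]
  rw [hmono] at hmem
  obtain ⟨t, htS, hle⟩ := hmem (Finsupp.single 0 (3 * m - 1) + Finsupp.single 1 (m + 1))
    (by classical rw [support_monomial, if_neg one_ne_zero]; simp)
  obtain ⟨a, b, c, d, habcd, rfl⟩ := hsum m t htS
  have h0 := hle 0
  have h1 := hle 1
  have h2 := hle 2
  simp only [hg1, hg2, hg3, hg4, Finsupp.add_apply, Finsupp.smul_apply,
    Finsupp.single_apply, smul_eq_mul] at h0 h1 h2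
  norm_num [Fin.ext_iff] at h0 h1 h2
  have h0' : b + c * 3 + d * 4 + 1 ≤ 3 * m := by omega
  omega
end

section
/- Let R = K[x_1, x_2, x_3] and I = (x_2^4, x_1 x_2^3, x_1^3 x_2, x_1^4 x_3). Then (I^2 : I) ≠ I; hence I does not satisfy the strong persistence property. -/
open MvPolynomial

lemma exIdeal_eq (K : Type*) [Field K] :
    exIdeal K = Ideal.span ((fun s => monomial s (1 : K)) ''
      ({Finsupp.single 1 4,
        Finsupp.single 0 1 + Finsupp.single 1 3,
        Finsupp.single 0 3 + Finsupp.single 1 1,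
        Finsupp.single 0 4 + Finsupp.single 2 1} : Set (Fin 3 →₀ ℕ))) := by
  unfold exIdeal
  congr 1
  simp only [Set.image_insert_eq, Set.image_singleton]
  rw [X_pow_eq_monomial, X_pow_eq_monomial, X_pow_eq_monomial, X_pow_eq_monomial]
  simp only [X, monomial_mul, one_mul]

lemma witness_not_mem (K : Type*) [Field K] :
    (X 0 ^ 2 * X 1 ^ 2 * X 2 : MvPolynomial (Fin 3) K) ∉ exIdeal K := by
  rw [exIdeal_eq, mem_ideal_span_monomial_image]
  have hw : (X 0 ^ 2 * X 1 ^ 2 * X 2 : MvPolynomial (Fin 3) K)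
      = monomial (Finsupp.single 0 2 + Finsupp.single 1 2 + Finsupp.single 2 1) 1 := by
    rw [X_pow_eq_monomial, X_pow_eq_monomial]
    simp only [X, monomial_mul, one_mul]
  classical
  rw [hw, support_monomial, if_neg (one_ne_zero (α := K))]
  push_neg
  refine ⟨_, Finset.mem_singleton_self _, ?_⟩
  intro si hsi
  rcases hsi with h1 | h1 | h1 | h1 <;> subst h1 <;> intro hle
  · have := hle 1; simp [Finsupp.single_apply] at this
  · have := hle 1; simp [Finsupp.single_apply] at this
  · have := hle 0; simp [Finsupp.single_apply] at this
  · have := hle 0; simp [Finsupp.single_apply] at this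

lemma witness_mem_colon (K : Type*) [Field K] :
    (X 0 ^ 2 * X 1 ^ 2 * X 2 : MvPolynomial (Fin 3) K) ∈
      Submodule.colon (exIdeal K ^ 2) (exIdeal K) := by
  rw [Submodule.mem_colon]
  intro p hp
  have hsq : exIdeal K ^ 2 = exIdeal K * exIdeal K := sq (exIdeal K)
  have hmem : ∀ g ∈ ({X 1 ^ 4, X 0 * X 1 ^ 3, X 0 ^ 3 * X 1, X 0 ^ 4 * X 2} :
      Set (MvPolynomial (Fin 3) K)), g ∈ exIdeal K := fun g hg => Ideal.subset_span hg
  induction hp using Submodule.span_induction with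
  | mem g hg =>
    rw [hsq, smul_eq_mul]
    rcases hg with h | h | h | h <;> subst h
    · have : (X 0 ^ 2 * X 1 ^ 2 * X 2 : MvPolynomial (Fin 3) K) * X 1 ^ 4
          = X 2 * ((X 0 * X 1 ^ 3) * (X 0 * X 1 ^ 3)) := by ring
      rw [this]
      exact Ideal.mul_mem_left _ _ (Ideal.mul_mem_mul (hmem _ (by simp)) (hmem _ (by simp)))
    · have : (X 0 ^ 2 * X 1 ^ 2 * X 2 : MvPolynomial (Fin 3) K) * (X 0 * X 1 ^ 3)
          = X 2 * (X 1 ^ 4 * (X 0 ^ 3 * X 1)) := by ring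
      rw [this]
      exact Ideal.mul_mem_left _ _ (Ideal.mul_mem_mul (hmem _ (by simp)) (hmem _ (by simp)))
    · have : (X 0 ^ 2 * X 1 ^ 2 * X 2 : MvPolynomial (Fin 3) K) * (X 0 ^ 3 * X 1)
          = (X 0 * X 1 ^ 3) * (X 0 ^ 4 * X 2) := by ring
      rw [this]
      exact Ideal.mul_mem_mul (hmem _ (by simp)) (hmem _ (by simp))
    · have : (X 0 ^ 2 * X 1 ^ 2 * X 2 : MvPolynomial (Fin 3) K) * (X 0 ^ 4 * X 2)
          = X 2 ^ 2 * ((X 0 ^ 3 * X 1) * (X 0 ^ 3 * X 1)) := by ring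
      rw [this]
      exact Ideal.mul_mem_left _ _ (Ideal.mul_mem_mul (hmem _ (by simp)) (hmem _ (by simp)))
  | zero => simp
  | add a b _ _ ha hb => rw [smul_add]; exact add_mem ha hb
  | smul a p _ hp => rw [smul_comm]; exact Submodule.smul_mem _ _ hp

/-- `(I² : I) ≠ I`; hence `I` fails the strong persistence property
`(I^{k+1} : I) = I^k` for all `k ≥ 1`. -/
theorem stmt8 (K : Type*) [Field K] :
    Submodule.colon (exIdeal K ^ 2) (exIdeal K) ≠ exIdeal K ∧
      ¬ (∀ k : ℕ, 1 ≤ k →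
        Submodule.colon (exIdeal K ^ (k + 1)) (exIdeal K) = exIdeal K ^ k) := by
  have hne : Submodule.colon (exIdeal K ^ 2) (exIdeal K) ≠ exIdeal K := by
    intro h
    exact witness_not_mem K (h ▸ witness_mem_colon K)
  refine ⟨hne, fun h => hne ?_⟩
  simpa using h 1 le_rfl
end

section
/- Let u = x_{i_1} x_{i_2} ··· x_{i_d} be a t-spread monomial with i_{d−1} ≤ (d−1)t, and set A_k = [(k−1)t + 1, i_k] for k = 1,...,d. Then the sets A_1,...,A_d are pairwise disjoint, and every minimal generator x_{j_1} ··· x_{j_d} of B_t(u) satisfies j_k ∈ A_k for each k; consequently B_t(u) is the edge ideal of a d-uniform d-partite hypergraph with vertex partition A_1,...,A_d. -/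
open MvPolynomial
open scoped Classical

/-- A square-free exponent vector on variables `x₁, x₂, …` whose support has
consecutive gaps at least `t` (a `t`-spread monomial). -/
def IsTSpread (t : ℕ) (f : ℕ →₀ ℕ) : Prop :=
  (∀ i ∈ f.support, 1 ≤ i) ∧ (∀ i, f i ≤ 1) ∧
    ∀ i ∈ f.support, ∀ j ∈ f.support, i < j → i + t ≤ j

/-- A monomial ideal in `K[x₁, x₂, …]`. -/
def IsMonomialIdealN (K : Type*) [Field K] (I : Ideal (MvPolynomial ℕ K)) : Prop :=
  ∃ G : Set (ℕ →₀ ℕ), I = Ideal.span ((fun m => monomial m (1 : K)) '' G)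

/-- `m` is (the exponent vector of) a minimal monomial generator of `I`. -/
def IsMinGenN {K : Type*} [Field K] (I : Ideal (MvPolynomial ℕ K)) (m : ℕ →₀ ℕ) : Prop :=
  monomial m (1 : K) ∈ I ∧ ∀ m' : ℕ →₀ ℕ, m' ≤ m → m' ≠ m → monomial m' (1 : K) ∉ I

/-- `t`-spread strongly stable monomial ideal. -/
def IsTSSS (K : Type*) [Field K] (t : ℕ) (I : Ideal (MvPolynomial ℕ K)) : Prop :=
  IsMonomialIdealN K I ∧
    ∀ u : ℕ →₀ ℕ, IsMinGenN I u → IsTSpread t u → ∀ j ∈ u.support, ∀ i < j,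
      IsTSpread t (u - Finsupp.single j 1 + Finsupp.single i 1) →
        monomial (u - Finsupp.single j 1 + Finsupp.single i 1) (1 : K) ∈ I

/-- `B_t(u)`: the smallest `t`-spread strongly stable ideal containing the
`t`-spread monomial `x^u`. -/
noncomputable def BorelT (K : Type*) [Field K] (t : ℕ) (u : ℕ →₀ ℕ) :
    Ideal (MvPolynomial ℕ K) :=
  sInf {I | IsTSSS K t I ∧ monomial u (1 : K) ∈ I}

def fdeg (m : ℕ →₀ ℕ) : ℕ := m.sum fun _ n => n

lemma fdeg_lt {a b : ℕ →₀ ℕ} (h : a ≤ b) (hne : a ≠ b) : fdeg a < fdeg b := by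
  have hb : b = a + (b - a) := (add_tsub_cancel_of_le h).symm
  have hadd : fdeg (a + (b - a)) = fdeg a + fdeg (b - a) :=
    Finsupp.sum_add_index' (fun _ => rfl) (fun _ _ _ => rfl)
  have hne2 : b - a ≠ 0 := by
    intro h0
    apply hne
    rw [hb, h0, add_zero]
  obtain ⟨x, hx⟩ := Finsupp.support_nonempty_iff.2 hne2
  have hx1 : 1 ≤ (b - a) x := Nat.one_le_iff_ne_zero.2 (Finsupp.mem_support_iff.1 hx)
  have : 1 ≤ fdeg (b - a) := le_trans hx1 (Finset.single_le_sum (f := fun y => (b - a) y)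
    (fun _ _ => Nat.zero_le _) hx)
  calc fdeg a < fdeg a + fdeg (b - a) := by omega
    _ = fdeg b := by rw [← hadd, ← hb]

lemma monomial_mem_of_le {K : Type*} [Field K] {I : Ideal (MvPolynomial ℕ K)} {g m : ℕ →₀ ℕ}
    (hle : g ≤ m) (hg : monomial g (1 : K) ∈ I) : monomial m (1 : K) ∈ I := by
  have : monomial m (1 : K) = monomial (m - g) 1 * monomial g 1 := by
    rw [monomial_mul, one_mul, tsub_add_cancel_of_le hle]
  rw [this]
  exact Ideal.mul_mem_left _ _ hg

lemma exists_minGen {K : Type*} [Field K] {I : Ideal (MvPolynomial ℕ K)} (m : ℕ →₀ ℕ)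
    (hm : monomial m (1 : K) ∈ I) : ∃ g, g ≤ m ∧ IsMinGenN I g := by
  have H : ∀ n : ℕ, ∀ m : ℕ →₀ ℕ, fdeg m ≤ n → monomial m (1 : K) ∈ I →
      ∃ g, g ≤ m ∧ IsMinGenN I g := by
    intro n
    induction n with
    | zero =>
      intro m hdeg hm
      refine ⟨m, le_rfl, hm, fun m' hle hne hmem => ?_⟩
      have := fdeg_lt hle hne
      omega
    | succ n ih =>
      intro m hdeg hm
      by_cases hmin : ∀ m', m' ≤ m → m' ≠ m → monomial m' (1 : K) ∉ I
      · exact ⟨m, le_rfl, hm, hmin⟩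
      · push_neg at hmin
        obtain ⟨m', hle, hne, hmem⟩ := hmin
        have := fdeg_lt hle hne
        obtain ⟨g, hg1, hg2⟩ := ih m' (by omega) hmem
        exact ⟨g, le_trans hg1 hle, hg2⟩
  exact H (fdeg m) m le_rfl hm

lemma isTSpread_mono {t : ℕ} {a b : ℕ →₀ ℕ} (h : a ≤ b) (hb : IsTSpread t b) : IsTSpread t a := by
  have hsub : a.support ⊆ b.support := Finsupp.support_mono h
  exact ⟨fun x hx => hb.1 x (hsub hx), fun x => le_trans (h x) (hb.2.1 x),
    fun x hx y hy hxy => hb.2.2 x (hsub hx) y (hsub hy) hxy⟩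

lemma sumSingle_apply {d : ℕ} (j : Fin d → ℕ) (hj : Function.Injective j) (x : ℕ) :
    (∑ k : Fin d, Finsupp.single (j k) 1 : ℕ →₀ ℕ) x
      = if x ∈ Finset.image j Finset.univ then 1 else 0 := by
  rw [Finsupp.finset_sum_apply]
  by_cases hx : x ∈ Finset.image j Finset.univ
  · obtain ⟨k, _, hk⟩ := Finset.mem_image.1 hx
    rw [if_pos hx, Finset.sum_eq_single k]
    · rw [hk, Finsupp.single_eq_same]
    · intro l _ hlk
      apply Finsupp.single_eq_of_ne'
      rw [← hk]
      exact fun he => hlk (hj he)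
    · intro h; exact absurd (Finset.mem_univ k) h
  · rw [if_neg hx, Finset.sum_eq_zero]
    intro l _
    apply Finsupp.single_eq_of_ne'
    intro he
    exact hx (Finset.mem_image.2 ⟨l, Finset.mem_univ l, he⟩)

lemma sumSingle_support {d : ℕ} (j : Fin d → ℕ) (hj : Function.Injective j) :
    (∑ k : Fin d, Finsupp.single (j k) 1 : ℕ →₀ ℕ).support = Finset.image j Finset.univ := by
  ext x
  rw [Finsupp.mem_support_iff, sumSingle_apply j hj]
  split <;> simp_all

lemma sq_eq_of_support_eq {a b : ℕ →₀ ℕ} (ha : ∀ x, a x ≤ 1) (hb : ∀ x, b x ≤ 1)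
    (h : a.support = b.support) : a = b := by
  ext x
  by_cases hx : x ∈ a.support
  · have hx' := h ▸ hx
    have := Finsupp.mem_support_iff.1 hx
    have := Finsupp.mem_support_iff.1 hx'
    have := ha x; have := hb x
    omega
  · have hx' : x ∉ b.support := h ▸ hx
    rw [Finsupp.notMem_support_iff.1 hx, Finsupp.notMem_support_iff.1 hx']

lemma seq_gaps_mul {d t : ℕ} {j : Fin d → ℕ}
    (hj : ∀ k : Fin d, ∀ hk : (k : ℕ) + 1 < d, j k + t ≤ j ⟨(k : ℕ) + 1, hk⟩) :
    ∀ (n : ℕ) (hn : n < d) (k : Fin d), (k : ℕ) ≤ n → j k + (n - (k : ℕ)) * t ≤ j ⟨n, hn⟩ := by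
  intro n
  induction n with
  | zero =>
    intro hn k hk
    have : k = ⟨0, hn⟩ := Fin.ext (by simp only [Fin.val_mk]; omega)
    rw [this]
    simp
  | succ n ih =>
    intro hn k hk
    have hn' : n < d := by omega
    have step : j ⟨n, hn'⟩ + t ≤ j ⟨n + 1, hn⟩ := hj ⟨n, hn'⟩ hn
    by_cases hkn : (k : ℕ) ≤ n
    · have h1 := ih hn' k hkn
      have : (n + 1 - (k : ℕ)) * t = (n - (k : ℕ)) * t + t := by
        rw [show n + 1 - (k : ℕ) = (n - (k : ℕ)) + 1 by omega, Nat.add_mul, one_mul]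
      omega
    · have hkeq : k = ⟨n + 1, hn⟩ := Fin.ext (by simp only [Fin.val_mk]; omega)
      rw [hkeq]
      simp

lemma seq_gaps {d t : ℕ} {j : Fin d → ℕ}
    (hj : ∀ k : Fin d, ∀ hk : (k : ℕ) + 1 < d, j k + t ≤ j ⟨(k : ℕ) + 1, hk⟩) :
    ∀ k l : Fin d, (k : ℕ) < (l : ℕ) → j k + t ≤ j l := by
  intro k l hkl
  have h := seq_gaps_mul hj (l : ℕ) l.2 k (le_of_lt hkl)
  have ht' : t ≤ ((l : ℕ) - (k : ℕ)) * t := by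
    calc t = 1 * t := (one_mul t).symm
    _ ≤ ((l : ℕ) - (k : ℕ)) * t := Nat.mul_le_mul_right t (by omega)
  have heq : j ⟨(l : ℕ), l.2⟩ = j l := rfl
  omega

lemma seq_strictMono {d t : ℕ} (ht : 1 ≤ t) {j : Fin d → ℕ}
    (hj : ∀ k : Fin d, ∀ hk : (k : ℕ) + 1 < d, j k + t ≤ j ⟨(k : ℕ) + 1, hk⟩) :
    StrictMono j := by
  intro a b hab
  have := seq_gaps hj a b (by exact hab)
  omega

lemma seq_lb {d t : ℕ} (hd : 0 < d) {j : Fin d → ℕ}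
    (h1 : 1 ≤ j ⟨0, hd⟩)
    (hj : ∀ k : Fin d, ∀ hk : (k : ℕ) + 1 < d, j k + t ≤ j ⟨(k : ℕ) + 1, hk⟩) :
    ∀ k : Fin d, (k : ℕ) * t + 1 ≤ j k := by
  intro k
  have h := seq_gaps_mul hj (k : ℕ) k.2 ⟨0, hd⟩ (by simp)
  have heq : j ⟨(k : ℕ), k.2⟩ = j k := rfl
  simp only [Fin.val_mk, Nat.sub_zero] at h
  omega

lemma orderEmb_le_iff {S : Finset ℕ} {d : ℕ} (hS : S.card = d) (k : Fin d) (m : ℕ) :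
    S.orderEmbOfFin hS k ≤ m ↔ (k : ℕ) + 1 ≤ (S.filter (fun x => x ≤ m)).card := by
  set e := S.orderEmbOfFin hS with he
  constructor
  · intro hkm
    have hcard : ((Finset.univ : Finset (Fin ((k : ℕ) + 1))).card
        ≤ (S.filter (fun x => x ≤ m)).card) := by
      apply Finset.card_le_card_of_injOn
        (fun l : Fin ((k : ℕ) + 1) => e ⟨(l : ℕ), lt_of_lt_of_le l.isLt k.isLt⟩)
      · intro l _
        rw [Finset.mem_coe, Finset.mem_filter]
        refine ⟨Finset.orderEmbOfFin_mem S hS _, ?_⟩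
        have hle : (⟨(l : ℕ), lt_of_lt_of_le l.isLt k.isLt⟩ : Fin d) ≤ k := by
          rw [Fin.le_def]
          exact Nat.lt_succ_iff.mp l.isLt
        exact le_trans (e.monotone hle) hkm
      · intro l1 _ l2 _ hl
        have h2 := e.injective hl
        exact Fin.ext (by simpa using congrArg Fin.val h2)
    simpa using hcard
  · intro hcard
    by_contra hlt
    push_neg at hlt
    have hsub : S.filter (fun x => x ≤ m) ⊆
        Finset.image (fun l : Fin (k : ℕ) => e ⟨(l : ℕ), lt_trans l.isLt k.isLt⟩)
          Finset.univ := by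
      intro x hx
      rw [Finset.mem_filter] at hx
      have hxS : x ∈ Set.range e := by rw [Finset.range_orderEmbOfFin]; exact hx.1
      obtain ⟨l, hl⟩ := hxS
      have hlk : (l : ℕ) < (k : ℕ) := by
        by_contra hge
        push_neg at hge
        have : e k ≤ e l := e.monotone (by exact hge)
        omega
      refine Finset.mem_image.2 ⟨⟨(l : ℕ), hlk⟩, Finset.mem_univ _, ?_⟩
      rw [← hl]
    have h1 := Finset.card_le_card hsub
    have hib := Finset.card_image_le
      (f := fun l : Fin (k : ℕ) => e ⟨(l : ℕ), lt_trans l.isLt k.isLt⟩) (s := Finset.univ)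
    simp only [Finset.card_univ, Fintype.card_fin] at hib
    omega

def GensSet (t d : ℕ) (i : Fin d → ℕ) : Set (ℕ →₀ ℕ) :=
  {g | IsTSpread t g ∧ g.support.card = d ∧
    ∀ k : Fin d, (k : ℕ) + 1 ≤ (g.support.filter (fun x => x ≤ i k)).card}

/-- membership from a sequence -/

lemma mkGen_mem {t d : ℕ} (ht : 1 ≤ t) (hd : 0 < d) (i j : Fin d → ℕ)
    (hj1 : 1 ≤ j ⟨0, hd⟩)
    (hjt : ∀ k : Fin d, ∀ hk : (k : ℕ) + 1 < d, j k + t ≤ j ⟨(k : ℕ) + 1, hk⟩)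
    (hji : ∀ k, j k ≤ i k) :
    (∑ k : Fin d, Finsupp.single (j k) 1 : ℕ →₀ ℕ) ∈ GensSet t d i := by
  have hsm : StrictMono j := seq_strictMono ht hjt
  have hinj : Function.Injective j := hsm.injective
  set g : ℕ →₀ ℕ := ∑ k : Fin d, Finsupp.single (j k) 1 with hg
  have hsupp : g.support = Finset.image j Finset.univ := sumSingle_support j hinj
  have happ : ∀ x, g x = if x ∈ Finset.image j Finset.univ then 1 else 0 :=
    sumSingle_apply j hinj
  have hlb := seq_lb hd hj1 hjt
  have hcard : g.support.card = d := by
    rw [hsupp, Finset.card_image_of_injective _ hinj, Finset.card_univ, Fintype.card_fin]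
  have hje : j = Finset.orderEmbOfFin g.support hcard := by
    apply Finset.orderEmbOfFin_unique hcard _ hsm
    intro x
    rw [hsupp]
    exact Finset.mem_image.2 ⟨x, Finset.mem_univ _, rfl⟩
  refine ⟨⟨?_, ?_, ?_⟩, hcard, ?_⟩
  · intro x hx
    rw [hsupp] at hx
    obtain ⟨l, _, hl⟩ := Finset.mem_image.1 hx
    have := hlb l
    omega
  · intro x
    rw [happ]
    split <;> omega
  · intro x hx y hy hxy
    rw [hsupp] at hx hy
    obtain ⟨a, _, ha⟩ := Finset.mem_image.1 hx
    obtain ⟨b, _, hb⟩ := Finset.mem_image.1 hy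
    have hab : a < b := by
      by_contra hba
      push_neg at hba
      have := hsm.le_iff_le.2 hba
      omega
    have := seq_gaps hjt a b hab
    omega
  · intro k
    rw [← orderEmb_le_iff hcard k (i k), ← hje]
    exact hji k

/-- extraction: data of a generator -/

lemma gens_extract {t d : ℕ} (ht : 1 ≤ t) (hd : 0 < d) {i : Fin d → ℕ} {g : ℕ →₀ ℕ}
    (hg : g ∈ GensSet t d i) :
    ∃ e : Fin d → ℕ,
      (1 ≤ e ⟨0, hd⟩) ∧
      (∀ k : Fin d, ∀ hk : (k : ℕ) + 1 < d, e k + t ≤ e ⟨(k : ℕ) + 1, hk⟩) ∧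
      (∀ k, e k ≤ i k) ∧ StrictMono e ∧
      g.support = Finset.image e Finset.univ ∧
      (∀ x, g x = if x ∈ Finset.image e Finset.univ then 1 else 0) := by
  obtain ⟨hsp, hcard, hcount⟩ := hg
  set e0 := Finset.orderEmbOfFin g.support hcard with he0
  refine ⟨fun k => e0 k, ?_, ?_, ?_, e0.strictMono, ?_, ?_⟩
  · exact hsp.1 _ (Finset.orderEmbOfFin_mem _ hcard _)
  · intro k hk
    apply hsp.2.2 _ (Finset.orderEmbOfFin_mem _ hcard _) _ (Finset.orderEmbOfFin_mem _ hcard _)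
    exact e0.strictMono (by rw [Fin.lt_def]; simp)
  · intro k
    rw [orderEmb_le_iff hcard k (i k)]
    exact hcount k
  · ext x
    simp only [Finset.mem_image, Finset.mem_univ, true_and]
    constructor
    · intro hx
      have : x ∈ Set.range e0 := by rw [Finset.range_orderEmbOfFin]; exact hx
      obtain ⟨l, hl⟩ := this
      exact ⟨l, hl⟩
    · rintro ⟨l, rfl⟩
      exact Finset.orderEmbOfFin_mem _ hcard _
  · intro x
    by_cases hx : x ∈ Finset.image (fun k => e0 k) Finset.univ
    · rw [if_pos hx]
      have hxs : x ∈ g.support := by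
        obtain ⟨l, _, hl⟩ := Finset.mem_image.1 hx
        rw [← hl]
        exact Finset.orderEmbOfFin_mem _ hcard _
      have h1 := Finsupp.mem_support_iff.1 hxs
      have h2 := hsp.2.1 x
      omega
    · rw [if_neg hx]
      rw [← Finsupp.notMem_support_iff]
      intro hxs
      apply hx
      have : x ∈ Set.range e0 := by rw [Finset.range_orderEmbOfFin]; exact hxs
      obtain ⟨l, hl⟩ := this
      exact Finset.mem_image.2 ⟨l, Finset.mem_univ _, hl⟩

lemma gens_exchange {t d : ℕ} {i : Fin d → ℕ} {g : ℕ →₀ ℕ}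
    (hg : g ∈ GensSet t d i) {a : ℕ} (ha : a ∈ g.support) {b : ℕ} (hb : b < a)
    (hw : IsTSpread t (g - Finsupp.single a 1 + Finsupp.single b 1)) :
    (g - Finsupp.single a 1 + Finsupp.single b 1) ∈ GensSet t d i := by
  obtain ⟨hsp, hcard, hcount⟩ := hg
  set w : ℕ →₀ ℕ := g - Finsupp.single a 1 + Finsupp.single b 1 with hwdef
  have hga : g a = 1 := by
    have := Finsupp.mem_support_iff.1 ha
    have := hsp.2.1 a
    omega
  have hwapp : ∀ x, w x = g x - (if a = x then 1 else 0) + (if b = x then 1 else 0) := by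
    intro x
    rw [hwdef, Finsupp.add_apply, Finsupp.tsub_apply, Finsupp.single_apply, Finsupp.single_apply]
  have hgb : g b = 0 := by
    by_contra hgb0
    have hwb : w b = 2 := by
      rw [hwapp b, if_neg (by omega), if_pos rfl]
      have hb1 : g b = 1 := by have := hsp.2.1 b; omega
      omega
    have := hw.2.1 b
    omega
  have hbs : b ∉ g.support := by rw [Finsupp.notMem_support_iff]; exact hgb
  have hsupp : w.support = insert b (g.support.erase a) := by
    ext x
    rw [Finsupp.mem_support_iff, hwapp x, Finset.mem_insert, Finset.mem_erase,
      Finsupp.mem_support_iff]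
    by_cases hxb : x = b
    · subst hxb; simp [if_pos rfl, if_neg (show ¬ a = x from by omega)]
    · by_cases hxa : x = a
      · subst hxa
        rw [if_pos rfl, if_neg (by omega)]
        simp [hga]
        omega
      · rw [if_neg (by omega), if_neg (by omega)]
        constructor
        · intro h; exact Or.inr ⟨hxa, by omega⟩
        · rintro (h | ⟨_, h⟩)
          · omega
          · omega
  have hd1 : 1 ≤ d := by
    rw [← hcard]
    exact Finset.card_pos.2 ⟨a, ha⟩
  have hbne : b ∉ g.support.erase a := fun h => hbs (Finset.mem_of_mem_erase h)
  have hwcard : w.support.card = d := by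
    rw [hsupp, Finset.card_insert_of_notMem hbne, Finset.card_erase_of_mem ha, hcard]
    omega
  refine ⟨hw, hwcard, ?_⟩
  intro k
  have hk := hcount k
  rw [hsupp, Finset.filter_insert, Finset.filter_erase]
  by_cases hak : a ≤ i k
  · have hbk : b ≤ i k := by omega
    rw [if_pos hbk]
    have hafil : a ∈ g.support.filter (fun x => x ≤ i k) := Finset.mem_filter.2 ⟨ha, hak⟩
    rw [Finset.card_insert_of_notMem (fun h => hbne (by
      have := Finset.mem_of_mem_erase h
      exact Finset.mem_erase.2 ⟨by omega, (Finset.mem_filter.1 this).1⟩)),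
      Finset.card_erase_of_mem hafil]
    have : 1 ≤ (g.support.filter (fun x => x ≤ i k)).card := Finset.card_pos.2 ⟨a, hafil⟩
    omega
  · have hfe : (g.support.filter (fun x => x ≤ i k)).erase a
        = g.support.filter (fun x => x ≤ i k) := by
      apply Finset.erase_eq_of_notMem
      intro h
      exact hak (Finset.mem_filter.1 h).2
    rw [hfe]
    split
    · calc (k : ℕ) + 1 ≤ (g.support.filter (fun x => x ≤ i k)).card := hk
        _ ≤ (insert b (g.support.filter (fun x => x ≤ i k))).card :=
          Finset.card_le_card (Finset.subset_insert _ _)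
    · exact hk

lemma gens_sum_le {t d : ℕ} (ht : 1 ≤ t) (hd : 0 < d) {i : Fin d → ℕ} {g : ℕ →₀ ℕ}
    (hg : g ∈ GensSet t d i) : (∑ x ∈ g.support, x) ≤ ∑ k : Fin d, i k := by
  obtain ⟨e, he1, het, hei, hesm, hesupp, heapp⟩ := gens_extract ht hd hg
  rw [hesupp, Finset.sum_image (fun x _ y _ h => hesm.injective h)]
  exact Finset.sum_le_sum (fun k _ => hei k)

lemma gens_step {K : Type*} [Field K] {t d : ℕ} (ht : 1 ≤ t) (hd : 0 < d) {i : Fin d → ℕ}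
    (hit : ∀ k : Fin d, ∀ hk : (k : ℕ) + 1 < d, i k + t ≤ i ⟨(k : ℕ) + 1, hk⟩)
    {I : Ideal (MvPolynomial ℕ K)} (hI : IsTSSS K t I)
    {g : ℕ →₀ ℕ} (hg : g ∈ GensSet t d i)
    (hne : g ≠ ∑ k : Fin d, Finsupp.single (i k) 1) :
    ∃ g' ∈ GensSet t d i, (∑ x ∈ g'.support, x) = (∑ x ∈ g.support, x) + 1 ∧
      (monomial g' (1 : K) ∈ I → monomial g (1 : K) ∈ I) := by
  obtain ⟨e, he1, het, hei, hesm, hesupp, heapp⟩ := gens_extract ht hd hg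
  have hall : ¬ ∀ k, e k = i k := by
    intro hallk
    apply hne
    have hfun : e = i := funext hallk
    have hiinj : Function.Injective i := (seq_strictMono ht hit).injective
    apply sq_eq_of_support_eq
    · intro x; rw [heapp]; split <;> omega
    · intro x; rw [sumSingle_apply i hiinj]; split <;> omega
    · rw [hesupp, sumSingle_support i hiinj, hfun]
  push_neg at hall
  have hFne : (Finset.univ.filter (fun k : Fin d => e k < i k)).Nonempty := by
    obtain ⟨k, hk⟩ := hall
    exact ⟨k, Finset.mem_filter.2 ⟨Finset.mem_univ _, lt_of_le_of_ne (hei k) hk⟩⟩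
  set k₀ := (Finset.univ.filter (fun k : Fin d => e k < i k)).max' hFne with hk₀def
  have hk₀ : e k₀ < i k₀ :=
    (Finset.mem_filter.1 ((Finset.univ.filter (fun k : Fin d => e k < i k)).max'_mem hFne)).2
  have hmax : ∀ l : Fin d, k₀ < l → e l = i l := by
    intro l hl
    by_contra hne'
    have hlF : l ∈ Finset.univ.filter (fun k : Fin d => e k < i k) :=
      Finset.mem_filter.2 ⟨Finset.mem_univ _, lt_of_le_of_ne (hei l) hne'⟩
    have := Finset.le_max' _ l hlF
    exact absurd hl (not_lt.2 this)
  set j' : Fin d → ℕ := fun l => if l = k₀ then e k₀ + 1 else e l with hj'def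
  have hj'k₀ : j' k₀ = e k₀ + 1 := by simp [hj'def]
  have hj'ne : ∀ l, l ≠ k₀ → j' l = e l := by intro l hl; simp [hj'def, hl]
  have hj'0 : 1 ≤ j' ⟨0, hd⟩ := by
    by_cases h0 : (⟨0, hd⟩ : Fin d) = k₀
    · rw [h0, hj'k₀]; omega
    · rw [hj'ne _ h0]; exact he1
  have hj't : ∀ l : Fin d, ∀ hl : (l : ℕ) + 1 < d, j' l + t ≤ j' ⟨(l : ℕ) + 1, hl⟩ := by
    intro l hl
    have hl1ne : (⟨(l : ℕ) + 1, hl⟩ : Fin d) ≠ l := by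
      intro h
      have := congrArg Fin.val h
      simp at this
    by_cases hlk : l = k₀
    · subst hlk
      rw [hj'k₀, hj'ne _ (show (⟨(k₀ : ℕ) + 1, hl⟩ : Fin d) ≠ k₀ by
        intro h
        have := congrArg Fin.val h
        simp at this)]
      have h1 := hit k₀ hl
      have h2 := hmax ⟨(k₀ : ℕ) + 1, hl⟩ (by rw [Fin.lt_def]; simp)
      omega
    · rw [hj'ne _ hlk]
      by_cases hl1k : (⟨(l : ℕ) + 1, hl⟩ : Fin d) = k₀
      · rw [hl1k, hj'k₀]
        have h1 := het l hl
        rw [hl1k] at h1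
        omega
      · rw [hj'ne _ hl1k]
        exact het l hl
  have hj'i : ∀ l, j' l ≤ i l := by
    intro l
    by_cases hlk : l = k₀
    · rw [hlk, hj'k₀]; omega
    · rw [hj'ne _ hlk]; exact hei l
  have hg' : (∑ l : Fin d, Finsupp.single (j' l) 1 : ℕ →₀ ℕ) ∈ GensSet t d i :=
    mkGen_mem ht hd i j' hj'0 hj't hj'i
  set g' : ℕ →₀ ℕ := ∑ l : Fin d, Finsupp.single (j' l) 1 with hg'def
  have hj'inj : Function.Injective j' := (seq_strictMono ht hj't).injective
  have hsupp' : g'.support = Finset.image j' Finset.univ := sumSingle_support j' hj'inj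
  have happ' : ∀ x, g' x = if x ∈ Finset.image j' Finset.univ then 1 else 0 :=
    sumSingle_apply j' hj'inj
  have hsum : (∑ x ∈ g'.support, x) = (∑ x ∈ g.support, x) + 1 := by
    rw [hsupp', hesupp, Finset.sum_image (fun x _ y _ h => hj'inj h),
      Finset.sum_image (fun x _ y _ h => hesm.injective h)]
    have hterm : ∀ l : Fin d, j' l = e l + (if l = k₀ then 1 else 0) := by
      intro l
      by_cases hlk : l = k₀
      · rw [hlk, hj'k₀, if_pos rfl]
      · rw [hj'ne _ hlk, if_neg hlk]; omega
    rw [Finset.sum_congr rfl (fun l _ => hterm l), Finset.sum_add_distrib,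
      Finset.sum_ite_eq' Finset.univ k₀ (fun _ => 1), if_pos (Finset.mem_univ _)]
  refine ⟨g', hg', hsum, ?_⟩
  intro hg'I
  obtain ⟨h, hh_le, hhmin⟩ := exists_minGen g' hg'I
  have hhsp : IsTSpread t h := isTSpread_mono hh_le hg'.1
  have hsubh : h.support ⊆ g'.support := Finsupp.support_mono hh_le
  -- key index facts
  have hik₁ : ∀ l : Fin d, k₀ < l → e k₀ + 1 < e l := by
    intro l hl
    have hkl : (k₀ : ℕ) < (l : ℕ) := hl
    have hk1d : (k₀ : ℕ) + 1 < d := lt_of_le_of_lt (by omega) l.2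
    have h1 := hmax ⟨(k₀ : ℕ) + 1, hk1d⟩ (by rw [Fin.lt_def]; simp)
    have h2 := hit k₀ hk1d
    have h3 : e ⟨(k₀ : ℕ) + 1, hk1d⟩ ≤ e l := hesm.monotone (by rw [Fin.le_def]; simp; omega)
    omega
  have hag : (e k₀ + 1) ∉ g.support := by
    rw [hesupp]
    intro hmem
    obtain ⟨l, _, hl⟩ := Finset.mem_image.1 hmem
    by_cases hlk : (l : ℕ) ≤ (k₀ : ℕ)
    · have : e l ≤ e k₀ := hesm.monotone (by rw [Fin.le_def]; omega)
      omega
    · have := hik₁ l (by rw [Fin.lt_def]; omega)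
      omega
  have hbg' : e k₀ ∉ g'.support := by
    rw [hsupp']
    intro hmem
    obtain ⟨l, _, hl⟩ := Finset.mem_image.1 hmem
    by_cases hlk : l = k₀
    · rw [hlk, hj'k₀] at hl; omega
    · rw [hj'ne _ hlk] at hl
      exact hlk (hesm.injective hl)
  have hga : g (e k₀ + 1) = 0 := Finsupp.notMem_support_iff.1 hag
  have hgb : g (e k₀) = 1 := by
    have : e k₀ ∈ g.support := by
      rw [hesupp]; exact Finset.mem_image.2 ⟨k₀, Finset.mem_univ _, rfl⟩
    rw [heapp, if_pos (hesupp ▸ this)]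
  have hg'a : g' (e k₀ + 1) = 1 := by
    rw [happ', if_pos (Finset.mem_image.2 ⟨k₀, Finset.mem_univ _, hj'k₀⟩)]
  have hg'b : g' (e k₀) = 0 := Finsupp.notMem_support_iff.1 hbg'
  have hgg' : ∀ x, x ≠ e k₀ → x ≠ e k₀ + 1 → g' x = g x := by
    intro x hxb hxa
    rw [happ', heapp]
    congr 1
    apply propext
    constructor
    · intro hx
      obtain ⟨l, _, hl⟩ := Finset.mem_image.1 hx
      have hlk : l ≠ k₀ := by intro h; rw [h, hj'k₀] at hl; exact hxa hl.symm
      rw [hj'ne _ hlk] at hl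
      exact Finset.mem_image.2 ⟨l, Finset.mem_univ _, hl⟩
    · intro hx
      obtain ⟨l, _, hl⟩ := Finset.mem_image.1 hx
      have hlk : l ≠ k₀ := by intro h; rw [h] at hl; exact hxb hl.symm
      exact Finset.mem_image.2 ⟨l, Finset.mem_univ _, by rw [hj'ne _ hlk]; exact hl⟩
  by_cases hacase : (e k₀ + 1) ∈ h.support
  · set h' : ℕ →₀ ℕ := h - Finsupp.single (e k₀ + 1) 1 + Finsupp.single (e k₀) 1 with hh'def
    have hh'app : ∀ x, h' x
        = h x - (if e k₀ + 1 = x then 1 else 0) + (if e k₀ = x then 1 else 0) := by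
      intro x
      rw [hh'def, Finsupp.add_apply, Finsupp.tsub_apply, Finsupp.single_apply,
        Finsupp.single_apply]
    have hha : h (e k₀ + 1) = 1 := by
      have h1 := Finsupp.mem_support_iff.1 hacase
      have h2 := hhsp.2.1 (e k₀ + 1)
      omega
    have hhb : h (e k₀) = 0 := by
      rw [← Finsupp.notMem_support_iff]
      intro hmem
      exact hbg' (hsubh hmem)
    have hh'le : h' ≤ g := by
      rw [Finsupp.le_def]
      intro x
      by_cases hxa : x = e k₀ + 1
      · rw [hxa, hh'app, if_pos rfl, if_neg (by omega), hha]
        omega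
      · by_cases hxb : x = e k₀
        · rw [hxb, hh'app, if_neg (by omega), if_pos rfl, hhb, hgb]
        · rw [hh'app, if_neg (fun h => hxa h.symm), if_neg (fun h => hxb h.symm)]
          have := hh_le x
          rw [hgg' x hxb hxa] at this
          omega
    have hh'sp : IsTSpread t h' := isTSpread_mono hh'le hg.1
    have hIm := hI.2 h hhmin hhsp (e k₀ + 1) hacase (e k₀) (by omega) hh'sp
    exact monomial_mem_of_le hh'le hIm
  · have hhle : h ≤ g := by
      rw [Finsupp.le_def]
      intro x
      by_cases hxa : x = e k₀ + 1
      · rw [hxa, Finsupp.notMem_support_iff.1 hacase]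
        omega
      · by_cases hxb : x = e k₀
        · have : h x = 0 := by
            rw [← Finsupp.notMem_support_iff]
            intro hmem
            rw [hxb] at hmem
            exact hbg' (hsubh hmem)
          omega
        · have := hh_le x
          rw [hgg' x hxb hxa] at this
          omega
    exact monomial_mem_of_le hhle hhmin.1

lemma gens_mem_of_TSSS {K : Type*} [Field K] {t d : ℕ} (ht : 1 ≤ t) (hd : 0 < d)
    {i : Fin d → ℕ}
    (hit : ∀ k : Fin d, ∀ hk : (k : ℕ) + 1 < d, i k + t ≤ i ⟨(k : ℕ) + 1, hk⟩)
    {I : Ideal (MvPolynomial ℕ K)} (hI : IsTSSS K t I)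
    (hu : monomial (∑ k : Fin d, Finsupp.single (i k) 1) (1 : K) ∈ I) :
    ∀ g ∈ GensSet t d i, monomial g (1 : K) ∈ I := by
  suffices H : ∀ n : ℕ, ∀ g ∈ GensSet t d i,
      (∑ k : Fin d, i k) - (∑ x ∈ g.support, x) ≤ n → monomial g (1 : K) ∈ I by
    intro g hg
    exact H _ g hg le_rfl
  intro n
  induction n with
  | zero =>
    intro g hg hn
    by_cases hne : g = ∑ k : Fin d, Finsupp.single (i k) 1
    · rw [hne]; exact hu
    · obtain ⟨g', hg'G, hsum, _⟩ := gens_step ht hd hit hI hg hne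
      have h1 := gens_sum_le ht hd hg'G
      have h2 := gens_sum_le ht hd hg
      omega
  | succ n ih =>
    intro g hg hn
    by_cases hne : g = ∑ k : Fin d, Finsupp.single (i k) 1
    · rw [hne]; exact hu
    · obtain ⟨g', hg'G, hsum, himp⟩ := gens_step ht hd hit hI hg hne
      apply himp
      apply ih g' hg'G
      have := gens_sum_le ht hd hg'G
      omega

lemma J_mem_iff {K : Type*} [Field K] {t d : ℕ} {i : Fin d → ℕ} {m : ℕ →₀ ℕ} :
    monomial m (1 : K) ∈ Ideal.span ((fun m => monomial m (1 : K)) '' GensSet t d i)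
      ↔ ∃ g ∈ GensSet t d i, g ≤ m := by
  rw [mem_ideal_span_monomial_image]
  constructor
  · intro h
    apply h m
    simp [support_monomial]
  · rintro ⟨g, hg, hle⟩ xi hxi
    have hxm : xi = m := by simpa [support_monomial] using hxi
    exact ⟨g, hg, hxm ▸ hle⟩

lemma J_TSSS {K : Type*} [Field K] {t d : ℕ} {i : Fin d → ℕ} :
    IsTSSS K t (Ideal.span ((fun m => monomial m (1 : K)) '' GensSet t d i)) := by
  refine ⟨⟨_, rfl⟩, ?_⟩
  intro v hv hvs a ha b hb hw
  have hvG : v ∈ GensSet t d i := by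
    obtain ⟨g, hgG, hgle⟩ := J_mem_iff.1 hv.1
    by_cases he : g = v
    · exact he ▸ hgG
    · exact absurd (J_mem_iff.2 ⟨g, hgG, le_rfl⟩) (hv.2 g hgle he)
  exact J_mem_iff.2 ⟨_, gens_exchange hvG ha hb hw, le_rfl⟩

lemma borelT_eq {K : Type*} [Field K] {t d : ℕ} (ht : 1 ≤ t) (hd : 0 < d) {i : Fin d → ℕ}
    (hi1 : 1 ≤ i ⟨0, hd⟩)
    (hit : ∀ k : Fin d, ∀ hk : (k : ℕ) + 1 < d, i k + t ≤ i ⟨(k : ℕ) + 1, hk⟩) :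
    BorelT K t (∑ k : Fin d, Finsupp.single (i k) 1)
      = Ideal.span ((fun m => monomial m (1 : K)) '' GensSet t d i) := by
  have huG : (∑ k : Fin d, Finsupp.single (i k) 1 : ℕ →₀ ℕ) ∈ GensSet t d i :=
    mkGen_mem ht hd i i hi1 hit (fun k => le_rfl)
  apply le_antisymm
  · exact sInf_le ⟨J_TSSS, J_mem_iff.2 ⟨_, huG, le_rfl⟩⟩
  · apply le_sInf
    rintro I ⟨hI, huI⟩
    rw [Ideal.span_le]
    rintro p ⟨g, hgG, rfl⟩
    exact gens_mem_of_TSSS ht hd hit hI huI g hgG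

lemma minGen_borelT_mem {K : Type*} [Field K] {t d : ℕ} (ht : 1 ≤ t) (hd : 0 < d)
    {i : Fin d → ℕ} (hi1 : 1 ≤ i ⟨0, hd⟩)
    (hit : ∀ k : Fin d, ∀ hk : (k : ℕ) + 1 < d, i k + t ≤ i ⟨(k : ℕ) + 1, hk⟩)
    {m : ℕ →₀ ℕ} (hm : IsMinGenN (BorelT K t (∑ k : Fin d, Finsupp.single (i k) 1)) m) :
    m ∈ GensSet t d i := by
  rw [IsMinGenN, borelT_eq ht hd hi1 hit] at hm
  obtain ⟨g, hgG, hgle⟩ := J_mem_iff.1 hm.1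
  by_cases he : g = m
  · exact he ▸ hgG
  · exact absurd (J_mem_iff.2 ⟨g, hgG, le_rfl⟩) (hm.2 g hgle he)

lemma i_ub {t d : ℕ} (hd : 2 ≤ d) {i : Fin d → ℕ}
    (hit : ∀ k : Fin d, ∀ hk : (k : ℕ) + 1 < d, i k + t ≤ i ⟨(k : ℕ) + 1, hk⟩)
    (hd2 : d - 2 < d) (hdd : i ⟨d - 2, hd2⟩ ≤ (d - 1) * t) :
    ∀ l : Fin d, (l : ℕ) ≤ d - 2 → i l ≤ ((l : ℕ) + 1) * t := by
  intro l hl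
  have h1 := seq_gaps_mul hit (d - 2) hd2 l hl
  have h2 : ((l : ℕ) + 1) * t + (d - 2 - (l : ℕ)) * t = (d - 1) * t := by
    have hsum : (l : ℕ) + 1 + (d - 2 - (l : ℕ)) = d - 1 := by omega
    rw [← Nat.add_mul, hsum]
  have h3 : i l + (d - 2 - (l : ℕ)) * t ≤ ((l : ℕ) + 1) * t + (d - 2 - (l : ℕ)) * t := by
    rw [h2]
    exact le_trans h1 hdd
  exact Nat.le_of_add_le_add_right h3

lemma gens_inter {t d : ℕ} (ht : 1 ≤ t) (hd : 2 ≤ d) {i : Fin d → ℕ}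
    (hit : ∀ k : Fin d, ∀ hk : (k : ℕ) + 1 < d, i k + t ≤ i ⟨(k : ℕ) + 1, hk⟩)
    (hd2 : d - 2 < d) (hdd : i ⟨d - 2, hd2⟩ ≤ (d - 1) * t)
    {g : ℕ →₀ ℕ} (hg : g ∈ GensSet t d i) (k : Fin d) :
    (g.support ∩ Finset.Icc ((k : ℕ) * t + 1) (i k)).card = 1 := by
  have hd0 : 0 < d := by omega
  obtain ⟨e, he1, het, hei, hesm, hesupp, heapp⟩ := gens_extract ht hd0 hg
  have hlb := seq_lb hd0 he1 het
  have hub := i_ub hd hit hd2 hdd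
  have hset : g.support ∩ Finset.Icc ((k : ℕ) * t + 1) (i k) = {e k} := by
    ext x
    rw [Finset.mem_inter, Finset.mem_Icc, Finset.mem_singleton]
    constructor
    · rintro ⟨hxs, hx1, hx2⟩
      rw [hesupp] at hxs
      obtain ⟨l, _, rfl⟩ := Finset.mem_image.1 hxs
      rcases lt_trichotomy ((l : ℕ)) ((k : ℕ)) with hlk | hlk | hlk
      · exfalso
        have hle : (l : ℕ) ≤ d - 2 := by have := k.2; omega
        have h1 := hub l hle
        have h2 : ((l : ℕ) + 1) * t ≤ (k : ℕ) * t := Nat.mul_le_mul_right t (by omega)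
        have h3 := hei l
        omega
      · exact congrArg e (Fin.ext hlk)
      · exfalso
        have hke : (k : ℕ) ≤ d - 2 := by have := l.2; omega
        have h1 := hub k hke
        have h2 := hlb l
        have h3 : ((k : ℕ) + 1) * t ≤ (l : ℕ) * t := Nat.mul_le_mul_right t (by omega)
        omega
    · rintro rfl
      refine ⟨?_, hlb k, hei k⟩
      rw [hesupp]
      exact Finset.mem_image.2 ⟨k, Finset.mem_univ _, rfl⟩
  rw [hset, Finset.card_singleton]

/-- For a `t`-spread monomial `u = x_{i₁}⋯x_{i_d}` with `i_{d−1} ≤ (d−1)t`,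
the intervals `A_k = [(k−1)t+1, i_k]` are pairwise disjoint, and every minimal
generator of `B_t(u)` has support of size `d` meeting each `A_k` in exactly one
element; i.e. `B_t(u)` is the edge ideal of a `d`-uniform `d`-partite hypergraph
with vertex partition `A_1,…,A_d`.  (Indices of `A` are taken zero-based:
`A k = [k·t+1, i_k]`.) -/
theorem stmt11 {K : Type*} [Field K] (t d : ℕ) (ht : 1 ≤ t) (hd : 2 ≤ d)
    (i : Fin d → ℕ) (hi1 : 1 ≤ i ⟨0, by omega⟩)
    (hit : ∀ k : Fin d, ∀ hk : (k : ℕ) + 1 < d, i k + t ≤ i ⟨(k : ℕ) + 1, hk⟩)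
    (hdd : i ⟨d - 2, by omega⟩ ≤ (d - 1) * t)
    (A : Fin d → Finset ℕ) (hA : ∀ k : Fin d, A k = Finset.Icc ((k : ℕ) * t + 1) (i k)) :
    (∀ k l : Fin d, k ≠ l → Disjoint (A k) (A l)) ∧
      ∀ m : ℕ →₀ ℕ, IsMinGenN (BorelT K t (∑ k : Fin d, Finsupp.single (i k) 1)) m →
        m.support.card = d ∧ ∀ k : Fin d, (m.support ∩ A k).card = 1 := by
  have hd2 : d - 2 < d := by omega
  have hdd' : i ⟨d - 2, hd2⟩ ≤ (d - 1) * t := hdd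
  constructor
  · have haux : ∀ k l : Fin d, (k : ℕ) < (l : ℕ) → Disjoint (A k) (A l) := by
      intro k l hkl
      rw [Finset.disjoint_left]
      intro x hxk hxl
      rw [hA k, Finset.mem_Icc] at hxk
      rw [hA l, Finset.mem_Icc] at hxl
      have hk2 : (k : ℕ) ≤ d - 2 := by have := l.2; omega
      have h1 : i k ≤ ((k : ℕ) + 1) * t := i_ub hd hit hd2 hdd' k hk2
      have h2 : ((k : ℕ) + 1) * t ≤ (l : ℕ) * t := Nat.mul_le_mul_right t (by omega)
      omega
    intro k l hkl
    rcases lt_trichotomy ((k : ℕ)) ((l : ℕ)) with h | h | h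
    · exact haux k l h
    · exact absurd (Fin.ext h) hkl
    · exact (haux l k h).symm
  · intro m hm
    have hd0 : 0 < d := by omega
    have hmG := minGen_borelT_mem ht hd0 hi1 hit hm
    refine ⟨hmG.2.1, ?_⟩
    intro k
    rw [hA k]
    exact gens_inter ht hd hit hd2 hdd' hmG k
end

section
/- Let u = x_{i_1}···x_{i_d} be a t-spread monomial, I = B_t(u), and Γ its linear relation graph. If |A_k| ≥ 2 for some k (where A_k = [(k−1)t+1, i_k]), then A_k ⊆ V(Γ) and the induced subgraph of Γ on A_k is a complete graph. -/
open MvPolynomial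
open scoped Classical
section helpers
variable {K : Type*} [Field K]
lemma memSpanMono {G : Set (ℕ →₀ ℕ)} {m : ℕ →₀ ℕ} :
    monomial m (1 : K) ∈ Ideal.span ((fun m => monomial m (1 : K)) '' G) ↔ ∃ g ∈ G, g ≤ m := by
  rw [MvPolynomial.mem_ideal_span_monomial_image]
  simp [MvPolynomial.support_monomial]
lemma monomialMemOfLe {I : Ideal (MvPolynomial ℕ K)} {g f : ℕ →₀ ℕ}
    (hg : monomial g (1 : K) ∈ I) (hle : g ≤ f) : monomial f (1 : K) ∈ I := by
  have h : monomial f (1 : K) = monomial (f - g) (1 : K) * monomial g (1 : K) := by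
    rw [MvPolynomial.monomial_mul, one_mul, tsub_add_cancel_of_le hle]
  rw [h]; exact Ideal.mul_mem_left _ _ hg
lemma sumLtOfLeNe {f g : ℕ →₀ ℕ} (hle : g ≤ f) (hne : g ≠ f) :
    g.sum (fun _ e => e) < f.sum (fun _ e => e) := by
  have hsub : g.support ⊆ f.support := Finsupp.support_mono hle
  have hg : g.sum (fun _ e => e) = ∑ x ∈ f.support, g x :=
    Finsupp.sum_of_support_subset _ hsub _ (fun _ _ => rfl)
  have hf : f.sum (fun _ e => e) = ∑ x ∈ f.support, f x := rfl
  rw [hg, hf]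
  obtain ⟨x, hx⟩ : ∃ x, g x ≠ f x := by
    by_contra h; push_neg at h; exact hne (Finsupp.ext h)
  have hlt : g x < f x := lt_of_le_of_ne (Finsupp.le_def.mp hle x) hx
  refine Finset.sum_lt_sum (fun y _ => Finsupp.le_def.mp hle y) ⟨x, ?_, hlt⟩
  simp only [Finsupp.mem_support_iff]; omega
lemma existsMinGen {I : Ideal (MvPolynomial ℕ K)} (hI : IsMonomialIdealN K I) {f : ℕ →₀ ℕ}
    (hf : monomial f (1 : K) ∈ I) : ∃ m, IsMinGenN I m ∧ m ≤ f := by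
  obtain ⟨G, rfl⟩ := hI
  have main : ∀ N (f : ℕ →₀ ℕ), f.sum (fun _ e => e) ≤ N →
      monomial f (1 : K) ∈ Ideal.span ((fun m => monomial m (1 : K)) '' G) →
      ∃ m, IsMinGenN (Ideal.span ((fun m => monomial m (1 : K)) '' G)) m ∧ m ≤ f := by
    intro N
    induction N with
    | zero =>
      intro f hN hfI
      refine ⟨f, ⟨hfI, fun m' hle hne _ => ?_⟩, le_refl f⟩
      exact absurd (sumLtOfLeNe hle hne) (by omega)
    | succ N ih =>
      intro f hN hfI
      by_cases hmin : ∀ m' : ℕ →₀ ℕ, m' ≤ f → m' ≠ f →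
          monomial m' (1 : K) ∉ Ideal.span ((fun m => monomial m (1 : K)) '' G)
      · exact ⟨f, ⟨hfI, hmin⟩, le_refl f⟩
      · push_neg at hmin
        obtain ⟨m', hle, hne, hm'⟩ := hmin
        have : m'.sum (fun _ e => e) ≤ N := by
          have := sumLtOfLeNe hle hne; omega
        obtain ⟨m, hm, hmle⟩ := ih m' this hm'
        exact ⟨m, hm, le_trans hmle hle⟩
  exact main (f.sum fun _ e => e) f (le_refl _) hf
end helpers

section Fsum
variable {d : ℕ}
noncomputable def Fj (j : Fin d → ℕ) : ℕ →₀ ℕ := ∑ l : Fin d, Finsupp.single (j l) 1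
lemma Fj_apply (j : Fin d → ℕ) (inj : Function.Injective j) (x : ℕ) :
    Fj j x = if ∃ l, j l = x then 1 else 0 := by
  rw [Fj, Finsupp.finset_sum_apply]
  by_cases h : ∃ l, j l = x
  · obtain ⟨l₀, hl₀⟩ := h
    rw [if_pos ⟨l₀, hl₀⟩, Finset.sum_eq_single l₀]
    · simp [Finsupp.single_apply, hl₀]
    · intro b _ hb
      simp only [Finsupp.single_apply, ite_eq_right_iff]
      intro hbx; exact absurd (inj (hbx.trans hl₀.symm)) hb
    · simp
  · rw [if_neg h]
    refine Finset.sum_eq_zero fun b _ => ?_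
    simp only [Finsupp.single_apply, ite_eq_right_iff]
    intro hbx; exact absurd ⟨b, hbx⟩ h
lemma Fj_support (j : Fin d → ℕ) (inj : Function.Injective j) :
    (Fj j).support = Finset.image j Finset.univ := by
  ext x
  simp only [Finsupp.mem_support_iff, Fj_apply j inj, Finset.mem_image, Finset.mem_univ, true_and]
  split <;> simp_all
lemma Fj_support_card (j : Fin d → ℕ) (inj : Function.Injective j) :
    (Fj j).support.card = d := by
  rw [Fj_support j inj, Finset.card_image_of_injective _ inj, Finset.card_univ, Fintype.card_fin]
lemma Fj_le_one (j : Fin d → ℕ) (inj : Function.Injective j) (x : ℕ) : Fj j x ≤ 1 := by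
  rw [Fj_apply j inj]; split <;> omega
lemma tspreadSubset {t : ℕ} {f m : ℕ →₀ ℕ} (hf : IsTSpread t f) (hle : m ≤ f) :
    IsTSpread t m := by
  have hsub := Finsupp.support_mono hle
  exact ⟨fun x hx => hf.1 x (hsub hx), fun x => le_trans (Finsupp.le_def.mp hle x) (hf.2.1 x),
    fun x hx y hy hxy => hf.2.2 x (hsub hx) y (hsub hy) hxy⟩
lemma injOfGap {t : ℕ} (ht : 1 ≤ t) (j : Fin d → ℕ)
    (hgap : ∀ a b : Fin d, a < b → j a + t ≤ j b) : Function.Injective j := by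
  intro a b hab
  by_contra hne
  rcases lt_or_gt_of_ne hne with h | h
  · have := hgap a b h; omega
  · have := hgap b a h; omega
lemma tspreadFj {t : ℕ} (ht : 1 ≤ t) (j : Fin d → ℕ) (hj1 : ∀ l, 1 ≤ j l)
    (hgap : ∀ a b : Fin d, a < b → j a + t ≤ j b) : IsTSpread t (Fj j) := by
  have inj := injOfGap ht j hgap
  refine ⟨?_, Fj_le_one j inj, ?_⟩
  · intro x hx
    rw [Fj_support j inj] at hx
    obtain ⟨l, _, rfl⟩ := Finset.mem_image.mp hx
    exact hj1 l
  · intro x hx y hy hxy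
    rw [Fj_support j inj] at hx hy
    obtain ⟨a, _, rfl⟩ := Finset.mem_image.mp hx
    obtain ⟨b, _, rfl⟩ := Finset.mem_image.mp hy
    have hab : a < b := by
      rcases lt_trichotomy a b with h | h | h
      · exact h
      · subst h; omega
      · have := hgap b a h; omega
    exact hgap a b hab
end Fsum

section lemA
variable {K : Type*} [Field K]

lemma lemA {t d : ℕ} (ht : 1 ≤ t) (i : Fin d → ℕ)
    (hi1 : ∀ l, 1 ≤ i l) (igap : ∀ a b : Fin d, a < b → i a + t ≤ i b)
    {I : Ideal (MvPolynomial ℕ K)} (hI : IsTSSS K t I)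
    (hu : monomial (Fj i) (1 : K) ∈ I) :
    ∀ (N : ℕ) (j : Fin d → ℕ), (∀ l, 1 ≤ j l) → (∀ a b : Fin d, a < b → j a + t ≤ j b) →
      (∀ l, j l ≤ i l) → (∑ l : Fin d, (i l - j l)) ≤ N → monomial (Fj j) (1 : K) ∈ I := by
  intro N
  induction N with
  | zero =>
    intro j hj1 hjgap hji hN
    have hEq : ∀ l, j l = i l := by
      intro l
      have h1 : i l - j l = 0 := by
        by_contra h
        have : 0 < ∑ l : Fin d, (i l - j l) :=
          Finset.sum_pos' (fun _ _ => Nat.zero_le _) ⟨l, Finset.mem_univ l, by omega⟩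
        omega
      have := hji l; omega
    have hfe : Fj j = Fj i := Finset.sum_congr rfl (fun l _ => by rw [hEq l])
    rw [hfe]; exact hu
  | succ N ih =>
    intro j hj1 hjgap hji hN
    have injj : Function.Injective j := injOfGap ht j hjgap
    by_cases hEq : ∀ l, j l = i l
    · have hfe : Fj j = Fj i := Finset.sum_congr rfl (fun l _ => by rw [hEq l])
      rw [hfe]; exact hu
    push_neg at hEq
    obtain ⟨l₀, hl₀⟩ := hEq
    set S := Finset.univ.filter (fun l : Fin d => j l < i l) with hS
    have hSne : S.Nonempty := by
      refine ⟨l₀, ?_⟩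
      simp only [hS, Finset.mem_filter, Finset.mem_univ, true_and]
      exact lt_of_le_of_ne (hji l₀) hl₀
    set L := S.max' hSne with hL
    have hLmem : L ∈ S := S.max'_mem hSne
    have hjL : j L < i L := by
      simpa only [hS, Finset.mem_filter, Finset.mem_univ, true_and] using hLmem
    have hmax : ∀ l : Fin d, L < l → j l = i l := by
      intro l hl
      by_contra h
      have hmem : l ∈ S := by
        simp only [hS, Finset.mem_filter, Finset.mem_univ, true_and]
        exact lt_of_le_of_ne (hji l) h
      exact absurd (S.le_max' l hmem) (not_le.mpr hl)
    set j' := Function.update j L (i L) with hj'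
    have hj'L : j' L = i L := Function.update_self _ _ _
    have hj'ne : ∀ l, l ≠ L → j' l = j l := fun l h => Function.update_of_ne h _ _
    have hj'1 : ∀ l, 1 ≤ j' l := by
      intro l
      by_cases h : l = L
      · subst h; rw [hj'L]; exact hi1 L
      · rw [hj'ne l h]; exact hj1 l
    have hj'i : ∀ l, j' l ≤ i l := by
      intro l
      by_cases h : l = L
      · subst h; rw [hj'L]
      · rw [hj'ne l h]; exact hji l
    have hj'gap : ∀ a b : Fin d, a < b → j' a + t ≤ j' b := by
      intro a b hab
      by_cases ha : a = L
      · have hLb : L < b := ha ▸ hab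
        have hb : b ≠ L := (ne_of_gt hLb)
        rw [ha, hj'L, hj'ne b hb, hmax b hLb]
        exact igap L b hLb
      · by_cases hb : b = L
        · subst hb
          rw [hj'ne a ha, hj'L]
          have := hjgap a _ hab; omega
        · rw [hj'ne a ha, hj'ne b hb]; exact hjgap a b hab
    have inj' : Function.Injective j' := injOfGap ht j' hj'gap
    have hsum : ∑ l : Fin d, (i l - j' l) ≤ N := by
      have h1 : (i L - j L) + ∑ l ∈ Finset.univ.erase L, (i l - j l)
          = ∑ l : Fin d, (i l - j l) :=
        Finset.add_sum_erase Finset.univ (fun l => i l - j l) (Finset.mem_univ L)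
      have h2 : (i L - j' L) + ∑ l ∈ Finset.univ.erase L, (i l - j' l)
          = ∑ l : Fin d, (i l - j' l) :=
        Finset.add_sum_erase Finset.univ (fun l => i l - j' l) (Finset.mem_univ L)
      have h3 : ∑ l ∈ Finset.univ.erase L, (i l - j' l)
          = ∑ l ∈ Finset.univ.erase L, (i l - j l) :=
        Finset.sum_congr rfl (fun l hl => by rw [hj'ne l (Finset.ne_of_mem_erase hl)])
      rw [hj'L] at h2
      omega
    have hf' : monomial (Fj j') (1 : K) ∈ I := ih j' hj'1 hj'gap hj'i hsum
    obtain ⟨m, hm, hmle⟩ := existsMinGen hI.1 hf'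
    have key : ∀ x, Fj j x + (Finsupp.single (i L) 1 : ℕ →₀ ℕ) x
        = Fj j' x + (Finsupp.single (j L) 1 : ℕ →₀ ℕ) x := by
      have e1 : Fj j = Finsupp.single (j L) 1 + ∑ l ∈ Finset.univ.erase L, Finsupp.single (j l) 1 :=
        (Finset.add_sum_erase _ _ (Finset.mem_univ L)).symm
      have e2 : Fj j' = Finsupp.single (i L) 1 + ∑ l ∈ Finset.univ.erase L, Finsupp.single (j l) 1 := by
        rw [Fj, ← Finset.add_sum_erase _ _ (Finset.mem_univ L), hj'L]
        congr 1
        exact Finset.sum_congr rfl (fun l hl => by rw [hj'ne l (Finset.ne_of_mem_erase hl)])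
      have e3 : Fj j + Finsupp.single (i L) 1 = Fj j' + Finsupp.single (j L) 1 := by
        rw [e1, e2]; abel
      intro x
      have := DFunLike.congr_fun e3 x
      simpa [Finsupp.add_apply] using this
    by_cases hmiL : m (i L) = 0
    · apply monomialMemOfLe hm.1
      rw [Finsupp.le_def]; intro x
      by_cases hx : x = i L
      · subst hx; rw [hmiL]; exact Nat.zero_le _
      · have hk := key x
        have h1 : (Finsupp.single (i L) 1 : ℕ →₀ ℕ) x = 0 := by
          rw [Finsupp.single_apply, if_neg (fun h => hx h.symm)]
        have h2 := Finsupp.le_def.mp hmle x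
        omega
    · have hmiL1 : m (i L) = 1 := by
        have h1 := Finsupp.le_def.mp hmle (i L)
        have h2 := Fj_le_one j' inj' (i L)
        omega
      have hiLsupp : i L ∈ m.support := Finsupp.mem_support_iff.mpr hmiL
      have hmsub : m.support ⊆ (Fj j').support := Finsupp.support_mono hmle
      have hspm : IsTSpread t m := tspreadSubset (tspreadFj ht j' hj'1 hj'gap) hmle
      have hjLnot : Fj j' (j L) = 0 := by
        rw [Fj_apply j' inj', if_neg]
        rintro ⟨l, hl⟩
        by_cases h : l = L
        · subst h; rw [hj'L] at hl; omega
        · rw [hj'ne l h] at hl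
          exact h (injj hl)
      have hmjL : m (j L) = 0 := by
        have := Finsupp.le_def.mp hmle (j L); omega
      set m' := m - Finsupp.single (i L) 1 + Finsupp.single (j L) 1 with hm'def
      have hiLjL : i L ≠ j L := by omega
      have hm'app : ∀ x, m' x = (m x - (Finsupp.single (i L) 1 : ℕ →₀ ℕ) x)
          + (Finsupp.single (j L) 1 : ℕ →₀ ℕ) x := by
        intro x; rw [hm'def, Finsupp.add_apply, Finsupp.tsub_apply]
      have hm'iL : m' (i L) = 0 := by
        rw [hm'app, Finsupp.single_eq_same, Finsupp.single_apply, if_neg hiLjL.symm]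
        omega
      have hm'jL : m' (j L) = 1 := by
        rw [hm'app, Finsupp.single_eq_same, Finsupp.single_apply, if_neg hiLjL]
        omega
      have hm'other : ∀ x, x ≠ i L → x ≠ j L → m' x = m x := by
        intro x h1 h2
        rw [hm'app, Finsupp.single_apply, if_neg (fun h => h1 h.symm),
          Finsupp.single_apply, if_neg (fun h => h2 h.symm)]
        omega
      have hmform : ∀ x, m x ≠ 0 → x ≠ i L → ∃ l, l ≠ L ∧ x = j l := by
        intro x hx hxne
        have hx' := hmsub (Finsupp.mem_support_iff.mpr hx)
        rw [Fj_support j' inj', Finset.mem_image] at hx'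
        obtain ⟨l, _, rfl⟩ := hx'
        by_cases h : l = L
        · subst h; rw [hj'L] at hxne; exact absurd rfl hxne
        · exact ⟨l, h, hj'ne l h⟩
      have hform' : ∀ x ∈ m'.support, ∃ l, x = j l := by
        intro x hx
        rw [Finsupp.mem_support_iff] at hx
        by_cases h2 : x = j L
        · exact ⟨L, h2⟩
        by_cases h1 : x = i L
        · rw [h1, hm'iL] at hx; exact absurd rfl hx
        rw [hm'other x h1 h2] at hx
        obtain ⟨l, _, hl⟩ := hmform x hx h1
        exact ⟨l, hl⟩
      have gapj : ∀ a b : Fin d, j a < j b → j a + t ≤ j b := by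
        intro a b h
        rcases lt_trichotomy a b with h' | h' | h'
        · exact hjgap a b h'
        · subst h'; omega
        · have := hjgap b a h'; omega
      have hsp' : IsTSpread t m' := by
        refine ⟨?_, ?_, ?_⟩
        · intro x hx
          obtain ⟨l, rfl⟩ := hform' x hx
          exact hj1 l
        · intro x
          by_cases h1 : x = i L
          · rw [h1, hm'iL]; omega
          by_cases h2 : x = j L
          · rw [h2, hm'jL]
          rw [hm'other x h1 h2]
          exact hspm.2.1 x
        · intro x hx y hy hxy
          obtain ⟨a, rfl⟩ := hform' x hx
          obtain ⟨b, rfl⟩ := hform' y hy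
          exact gapj a b hxy
      have hm'I : monomial m' (1 : K) ∈ I := hI.2 m hm hspm (i L) hiLsupp (j L) hjL hsp'
      apply monomialMemOfLe hm'I
      rw [Finsupp.le_def]; intro x
      by_cases h1 : x = i L
      · rw [h1, hm'iL]; exact Nat.zero_le _
      by_cases h2 : x = j L
      · rw [h2, hm'jL]
        have hfjL : Fj j (j L) = 1 := by rw [Fj_apply j injj, if_pos ⟨L, rfl⟩]
        omega
      · rw [hm'other x h1 h2]
        have hk := key x
        have hs1 : (Finsupp.single (i L) 1 : ℕ →₀ ℕ) x = 0 := by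
          rw [Finsupp.single_apply, if_neg (fun h => h1 h.symm)]
        have hs2 : (Finsupp.single (j L) 1 : ℕ →₀ ℕ) x = 0 := by
          rw [Finsupp.single_apply, if_neg (fun h => h2 h.symm)]
        have h3 := Finsupp.le_def.mp hmle x
        omega
end lemA

section I0sec
variable {K : Type*} [Field K]

def G0 (t d : ℕ) (i : Fin d → ℕ) : Set (ℕ →₀ ℕ) :=
  {f | IsTSpread t f ∧ f.support.card = d ∧
    ∀ l : Fin d, ((f.support.filter (fun x => i l < x)).card + (l : ℕ) + 1 ≤ d)}

noncomputable def I0 (K : Type*) [Field K] (t d : ℕ) (i : Fin d → ℕ) :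
    Ideal (MvPolynomial ℕ K) :=
  Ideal.span ((fun m => monomial m (1 : K)) '' G0 t d i)

lemma minGenI0 {t d : ℕ} {i : Fin d → ℕ} {v : ℕ →₀ ℕ}
    (hv : IsMinGenN (I0 K t d i) v) : v ∈ G0 t d i := by
  obtain ⟨g, hg, hgle⟩ := memSpanMono.mp hv.1
  rcases eq_or_ne g v with rfl | hne
  · exact hg
  · exact absurd (memSpanMono.mpr ⟨g, hg, le_refl g⟩) (hv.2 g hgle hne)

lemma tsssI0 {t d : ℕ} {i : Fin d → ℕ} : IsTSSS K t (I0 K t d i) := by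
  refine ⟨⟨G0 t d i, rfl⟩, ?_⟩
  intro v hv hsv jj hjj ii hii hsp'
  obtain ⟨hts, hcard, hfil⟩ := minGenI0 hv
  set v' := v - Finsupp.single jj 1 + Finsupp.single ii 1 with hv'def
  have hvjj : v jj = 1 := by
    have h1 : v jj ≠ 0 := Finsupp.mem_support_iff.mp hjj
    have h2 := hts.2.1 jj; omega
  have hiijj : ii ≠ jj := ne_of_lt hii
  have happ : ∀ x, v' x = (v x - (Finsupp.single jj 1 : ℕ →₀ ℕ) x)
      + (Finsupp.single ii 1 : ℕ →₀ ℕ) x := by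
    intro x; rw [hv'def, Finsupp.add_apply, Finsupp.tsub_apply]
  have hv'ii : v' ii = v ii + 1 := by
    rw [happ, Finsupp.single_eq_same, Finsupp.single_apply, if_neg (fun h => hiijj h.symm)]
    omega
  have hvii : v ii = 0 := by
    have h := hsp'.2.1 ii
    omega
  have hv'jj : v' jj = 0 := by
    rw [happ, Finsupp.single_eq_same, Finsupp.single_apply, if_neg hiijj]
    omega
  have hv'other : ∀ x, x ≠ ii → x ≠ jj → v' x = v x := by
    intro x h1 h2
    rw [happ, Finsupp.single_apply, if_neg (fun h => h2 h.symm),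
      Finsupp.single_apply, if_neg (fun h => h1 h.symm)]
    omega
  have hiins : ii ∉ v.support := by simp [Finsupp.mem_support_iff, hvii]
  have hsupp : v'.support = insert ii (v.support.erase jj) := by
    ext x
    simp only [Finsupp.mem_support_iff, Finset.mem_insert, Finset.mem_erase]
    by_cases h1 : x = ii
    · subst h1
      simp only [hv'ii, hvii]
      simp
    by_cases h2 : x = jj
    · subst h2
      simp only [hv'jj]
      simp [h1, hiijj]
    · rw [hv'other x h1 h2]
      simp only [Finsupp.mem_support_iff] at *
      constructor
      · intro h; exact Or.inr ⟨h2, h⟩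
      · rintro (h | ⟨_, h⟩)
        · exact absurd h h1
        · exact h
  have hdpos : 0 < d := by
    have : 0 < v.support.card := Finset.card_pos.mpr ⟨jj, hjj⟩
    omega
  refine Ideal.subset_span ⟨v', ⟨hsp', ?_, ?_⟩, rfl⟩
  · rw [hsupp, Finset.card_insert_of_notMem (fun h => hiins (Finset.mem_of_mem_erase h)),
      Finset.card_erase_of_mem hjj, hcard]
    omega
  · intro l
    have h0 := hfil l
    rw [hsupp, Finset.filter_insert]
    by_cases hcase : i l < ii
    · rw [if_pos hcase, Finset.filter_erase]
      have hjmem : jj ∈ v.support.filter (fun x => i l < x) :=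
        Finset.mem_filter.mpr ⟨hjj, lt_trans hcase hii⟩
      have hnotmem : ii ∉ (v.support.filter (fun x => i l < x)).erase jj := by
        intro h
        exact hiins (Finset.mem_filter.mp (Finset.mem_of_mem_erase h)).1
      rw [Finset.card_insert_of_notMem hnotmem, Finset.card_erase_of_mem hjmem]
      have hpos : 0 < (v.support.filter (fun x => i l < x)).card :=
        Finset.card_pos.mpr ⟨jj, hjmem⟩
      omega
    · rw [if_neg hcase, Finset.filter_erase]
      have hle := Finset.card_erase_le (s := v.support.filter (fun x => i l < x)) (a := jj)
      omega

lemma FjG0 {t d : ℕ} (ht : 1 ≤ t) (i : Fin d → ℕ)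
    (igap : ∀ a b : Fin d, a < b → i a + t ≤ i b)
    (j : Fin d → ℕ) (hj1 : ∀ l, 1 ≤ j l) (hjgap : ∀ a b : Fin d, a < b → j a + t ≤ j b)
    (hji : ∀ l, j l ≤ i l) : Fj j ∈ G0 t d i := by
  have inj := injOfGap ht j hjgap
  refine ⟨tspreadFj ht j hj1 hjgap, Fj_support_card j inj, ?_⟩
  intro l
  rw [Fj_support j inj]
  have hsub : (Finset.image j Finset.univ).filter (fun x => i l < x)
      ⊆ Finset.image j (Finset.Ioi l) := by
    intro x hx
    obtain ⟨hmem, hlt⟩ := Finset.mem_filter.mp hx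
    obtain ⟨l', _, rfl⟩ := Finset.mem_image.mp hmem
    refine Finset.mem_image.mpr ⟨l', Finset.mem_Ioi.mpr ?_, rfl⟩
    by_contra h
    push_neg at h
    rcases lt_or_eq_of_le h with h' | h'
    · have h1 := igap l' l h'
      have h2 := hji l'
      omega
    · subst h'
      have := hji l'
      omega
  have hc1 : ((Finset.image j Finset.univ).filter (fun x => i l < x)).card
      ≤ (Finset.image j (Finset.Ioi l)).card := Finset.card_le_card hsub
  have hc2 : (Finset.image j (Finset.Ioi l)).card ≤ (Finset.Ioi l).card :=
    Finset.card_image_le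
  rw [Fin.card_Ioi] at hc2
  have hld : (l : ℕ) < d := l.isLt
  omega

lemma minGenBorel {t d : ℕ} (ht : 1 ≤ t) (i : Fin d → ℕ)
    (hi1 : ∀ l, 1 ≤ i l) (igap : ∀ a b : Fin d, a < b → i a + t ≤ i b)
    (j : Fin d → ℕ) (hj1 : ∀ l, 1 ≤ j l) (hjgap : ∀ a b : Fin d, a < b → j a + t ≤ j b)
    (hji : ∀ l, j l ≤ i l) :
    IsMinGenN (BorelT K t (Fj i)) (Fj j) := by
  constructor
  · refine Submodule.mem_sInf.mpr ?_
    rintro I ⟨hI, hu⟩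
    exact lemA ht i hi1 igap hI hu _ j hj1 hjgap hji (le_refl _)
  · intro m' hle hne hmem
    have hI0mem : I0 K t d i ∈ {I | IsTSSS K t I ∧ monomial (Fj i) (1 : K) ∈ I} :=
      ⟨tsssI0, Ideal.subset_span ⟨Fj i, FjG0 ht i igap i hi1 igap (fun l => le_refl _), rfl⟩⟩
    have hI0 : BorelT K t (Fj i) ≤ I0 K t d i := sInf_le hI0mem
    have hm'0 : monomial m' (1 : K) ∈ I0 K t d i := hI0 hmem
    obtain ⟨g, hgG, hgle⟩ := memSpanMono.mp hm'0
    have injj := injOfGap ht j hjgap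
    have hsub : g.support ⊆ (Fj j).support := Finsupp.support_mono (le_trans hgle hle)
    have hcards : (Fj j).support.card ≤ g.support.card := by
      rw [Fj_support_card j injj, hgG.2.1]
    have hseq : g.support = (Fj j).support := Finset.eq_of_subset_of_card_le hsub hcards
    have hgeq : g = Fj j := by
      ext x
      by_cases hx : x ∈ g.support
      · have h1 : 1 ≤ g x := by
          have := Finsupp.mem_support_iff.mp hx; omega
        have h2 : g x ≤ Fj j x := Finsupp.le_def.mp (le_trans hgle hle) x
        have h3 : Fj j x ≤ 1 := Fj_le_one j injj x
        omega
      · have h1 : g x = 0 := Finsupp.notMem_support_iff.mp hx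
        have h2 : Fj j x = 0 := by
          have hx2 : x ∉ (Fj j).support := hseq ▸ hx
          exact Finsupp.notMem_support_iff.mp hx2
        omega
    exact hne (le_antisymm hle (hgeq ▸ hgle))

end I0sec

/-- Adjacency in the linear relation graph `Γ` of a monomial ideal `I`:
`{a,b} ∈ E(Γ)` iff `x_a·u = x_b·v` for some minimal generators `u, v` of `I`. -/
def LRGAdj {K : Type*} [Field K] (I : Ideal (MvPolynomial ℕ K)) (a b : ℕ) : Prop :=
  a ≠ b ∧ ∃ u v : ℕ →₀ ℕ, IsMinGenN I u ∧ IsMinGenN I v ∧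
    Finsupp.single a 1 + u = Finsupp.single b 1 + v

/-- For a `t`-spread monomial `u = x_{i₁}⋯x_{i_d}` and `A_k = [(k−1)t+1, i_k]`
(zero-based: `A k = [k·t+1, i_k]`): if `|A_k| ≥ 2`, then `A_k ⊆ V(Γ)` and the
induced subgraph of the linear relation graph `Γ` of `B_t(u)` on `A_k` is
complete. -/
theorem stmt14 {K : Type*} [Field K] (t d : ℕ) (ht : 1 ≤ t) (hd : 1 ≤ d)
    (i : Fin d → ℕ) (hi1 : 1 ≤ i ⟨0, by omega⟩)
    (hit : ∀ l : Fin d, ∀ hl : (l : ℕ) + 1 < d, i l + t ≤ i ⟨(l : ℕ) + 1, hl⟩)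
    (k : Fin d) (A : Fin d → Finset ℕ)
    (hA : ∀ l : Fin d, A l = Finset.Icc ((l : ℕ) * t + 1) (i l))
    (hcard : 2 ≤ (A k).card) :
    (∀ a ∈ A k, ∃ b : ℕ,
        LRGAdj (BorelT K t (∑ l : Fin d, Finsupp.single (i l) 1)) a b) ∧
      ∀ a ∈ A k, ∀ b ∈ A k, a ≠ b →
        LRGAdj (BorelT K t (∑ l : Fin d, Finsupp.single (i l) 1)) a b := by
  have igap : ∀ a b : Fin d, a < b → i a + t ≤ i b := by
    have main : ∀ (b : ℕ) (hb : b < d) (a : Fin d), (a : ℕ) < b → i a + t ≤ i ⟨b, hb⟩ := by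
      intro b
      induction b with
      | zero => intro hb a ha; omega
      | succ n ihn =>
        intro hb a ha
        have hn : n < d := Nat.lt_of_succ_lt hb
        have h2 : i ⟨n, hn⟩ + t ≤ i ⟨n + 1, hb⟩ := hit ⟨n, hn⟩ hb
        rcases Nat.lt_succ_iff_lt_or_eq.mp ha with h' | h'
        · have := ihn hn a h'; omega
        · have he : a = ⟨n, hn⟩ := Fin.ext h'
          rw [he]; omega
    intro a b hab
    exact main (b : ℕ) b.isLt a hab
  have ilow : ∀ l : Fin d, (l : ℕ) * t + 1 ≤ i l := by
    have main : ∀ (b : ℕ) (hb : b < d), b * t + 1 ≤ i ⟨b, hb⟩ := by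
      intro b
      induction b with
      | zero => intro hb; simpa using hi1
      | succ n ihn =>
        intro hb
        have hn : n < d := Nat.lt_of_succ_lt hb
        have h2 : i ⟨n, hn⟩ + t ≤ i ⟨n + 1, hb⟩ := hit ⟨n, hn⟩ hb
        have h3 := ihn hn
        have hmul : (n + 1) * t = n * t + t := Nat.succ_mul n t
        omega
    intro l
    exact main (l : ℕ) l.isLt
  have hi1' : ∀ l, 1 ≤ i l := fun l => by have := ilow l; omega
  have main2 : ∀ a ∈ A k, ∀ b ∈ A k, a ≠ b →
      LRGAdj (BorelT K t (∑ l : Fin d, Finsupp.single (i l) 1)) a b := by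
    intro a ha b hb hab
    rw [hA k, Finset.mem_Icc] at ha hb
    set jw : ℕ → Fin d → ℕ :=
      fun c l => if (l : ℕ) < (k : ℕ) then (l : ℕ) * t + 1 else if l = k then c else i l
      with hjw
    have hjwk : ∀ c, jw c k = c := by intro c; simp [hjw]
    have hjwlt : ∀ c (l : Fin d), (l : ℕ) < (k : ℕ) → jw c l = (l : ℕ) * t + 1 := by
      intro c l h
      simp only [hjw]
      rw [if_pos h]
    have hjwgt : ∀ c (l : Fin d), (k : ℕ) < (l : ℕ) → jw c l = i l := by
      intro c l h
      have h1 : ¬ (l : ℕ) < (k : ℕ) := by omega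
      have h2 : l ≠ k := by intro he; rw [he] at h; omega
      simp only [hjw]
      rw [if_neg h1, if_neg h2]
    have hjwne : ∀ c c' (l : Fin d), l ≠ k → jw c l = jw c' l := by
      intro c c' l hl
      rcases Nat.lt_trichotomy (l : ℕ) (k : ℕ) with h | h | h
      · rw [hjwlt c l h, hjwlt c' l h]
      · exact absurd (Fin.ext h) hl
      · rw [hjwgt c l h, hjwgt c' l h]
    have hprop : ∀ c, (k : ℕ) * t + 1 ≤ c → c ≤ i k →
        (∀ l, 1 ≤ jw c l) ∧ (∀ x y : Fin d, x < y → jw c x + t ≤ jw c y) ∧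
          (∀ l, jw c l ≤ i l) := by
      intro c hc1 hc2
      refine ⟨?_, ?_, ?_⟩
      · intro l
        rcases Nat.lt_trichotomy (l : ℕ) (k : ℕ) with h | h | h
        · rw [hjwlt c l h]; omega
        · rw [Fin.ext h, hjwk]; omega
        · rw [hjwgt c l h]; exact hi1' l
      · intro x y hxy
        have hxyn : (x : ℕ) < (y : ℕ) := hxy
        rcases Nat.lt_trichotomy (y : ℕ) (k : ℕ) with hy | hy | hy
        · have hx : (x : ℕ) < (k : ℕ) := by omega
          rw [hjwlt c x hx, hjwlt c y hy]
          have h1 : ((x : ℕ) + 1) * t ≤ (y : ℕ) * t := Nat.mul_le_mul_right t (by omega)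
          have h2 : ((x : ℕ) + 1) * t = (x : ℕ) * t + t := Nat.succ_mul _ _
          omega
        · have hx : (x : ℕ) < (k : ℕ) := by omega
          rw [hjwlt c x hx, Fin.ext hy, hjwk]
          have h1 : ((x : ℕ) + 1) * t ≤ (k : ℕ) * t := Nat.mul_le_mul_right t (by omega)
          have h2 : ((x : ℕ) + 1) * t = (x : ℕ) * t + t := Nat.succ_mul _ _
          omega
        · rw [hjwgt c y hy]
          have hky : k < y := Fin.lt_def.mpr hy
          have hik : i k + t ≤ i y := igap k y hky
          rcases Nat.lt_trichotomy (x : ℕ) (k : ℕ) with hx | hx | hx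
          · rw [hjwlt c x hx]
            have h1 : ((x : ℕ) + 1) * t ≤ (k : ℕ) * t := Nat.mul_le_mul_right t (by omega)
            have h2 : ((x : ℕ) + 1) * t = (x : ℕ) * t + t := Nat.succ_mul _ _
            have h3 := ilow k
            omega
          · rw [Fin.ext hx, hjwk]
            omega
          · rw [hjwgt c x hx]
            exact igap x y hxy
      · intro l
        rcases Nat.lt_trichotomy (l : ℕ) (k : ℕ) with h | h | h
        · rw [hjwlt c l h]; exact le_trans (by omega) (ilow l)
        · rw [Fin.ext h, hjwk]; exact hc2
        · rw [hjwgt c l h]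
    have hca := hprop a ha.1 ha.2
    have hcb := hprop b hb.1 hb.2
    refine ⟨hab, Fj (jw b), Fj (jw a), ?_, ?_, ?_⟩
    · exact minGenBorel ht i hi1' igap (jw b) hcb.1 hcb.2.1 hcb.2.2
    · exact minGenBorel ht i hi1' igap (jw a) hca.1 hca.2.1 hca.2.2
    · have hsplit : ∀ c, Fj (jw c) = Finsupp.single (jw c k) 1
          + ∑ l ∈ Finset.univ.erase k, Finsupp.single (jw c l) 1 :=
        fun c => (Finset.add_sum_erase Finset.univ
          (fun l => Finsupp.single (jw c l) 1) (Finset.mem_univ k)).symm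
      have hsum_eq : ∑ l ∈ Finset.univ.erase k, Finsupp.single (jw b l) 1
          = ∑ l ∈ Finset.univ.erase k, Finsupp.single (jw a l) 1 :=
        Finset.sum_congr rfl (fun l hl => by rw [hjwne b a l (Finset.ne_of_mem_erase hl)])
      rw [hsplit a, hsplit b, hjwk, hjwk, hsum_eq]
      rw [← add_assoc, ← add_assoc, add_comm (Finsupp.single a 1) (Finsupp.single b 1)]
  refine ⟨?_, main2⟩
  intro a ha
  obtain ⟨b, hbmem, hbne⟩ := Finset.exists_mem_ne (s := A k) (by omega) a
  exact ⟨b, main2 a ha b hbmem (Ne.symm hbne)⟩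
end
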